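/- arXiv:math/0307390 — 3 statements merged into one kernel-verified Lean document; each statement's English description precedes it below -/
import Mathlib

section
/- Every simple H-module is finite-dimensional as a k-vector space. -/
open scoped BigOperators

noncomputable section

universe u

/-- The defining relations of the rank-1 rational Cherednik algebra `H_t`:
`s ^ r = 1`, `s x = ε⁻¹ x s`, `s y = ε y s`, `y x - x y = t - ∑_{j=1}^{r-1} c_j s^j`. -/
inductive CherednikRel (k : Type u) [Field k] (r : ℕ) (ε t : k) (c : ℕ → k) :
    FreeAlgebra k (Fin 3) → FreeAlgebra k (Fin 3) → Prop
  | spow : CherednikRel k r ε t c (FreeAlgebra.ι k (2 : Fin 3) ^ r) 1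
  | sx : CherednikRel k r ε t c
      (FreeAlgebra.ι k (2 : Fin 3) * FreeAlgebra.ι k (0 : Fin 3))
      (ε⁻¹ • (FreeAlgebra.ι k (0 : Fin 3) * FreeAlgebra.ι k (2 : Fin 3)))
  | sy : CherednikRel k r ε t c
      (FreeAlgebra.ι k (2 : Fin 3) * FreeAlgebra.ι k (1 : Fin 3))
      (ε • (FreeAlgebra.ι k (1 : Fin 3) * FreeAlgebra.ι k (2 : Fin 3)))
  | yx : CherednikRel k r ε t c
      (FreeAlgebra.ι k (1 : Fin 3) * FreeAlgebra.ι k (0 : Fin 3) -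
        FreeAlgebra.ι k (0 : Fin 3) * FreeAlgebra.ι k (1 : Fin 3))
      (algebraMap k (FreeAlgebra k (Fin 3)) t -
        ∑ j ∈ Finset.Icc 1 (r - 1), c j • FreeAlgebra.ι k (2 : Fin 3) ^ j)

/-- The rank-1 rational Cherednik algebra `H_t` over `k`, with parameters
`r`, primitive root `ε`, `t`, and `c`. -/
abbrev Cherednik (k : Type u) [Field k] (r : ℕ) (ε t : k) (c : ℕ → k) : Type u :=
  RingQuot (CherednikRel k r ε t c)

/-- The generator `x` of `H_t`. -/
def Hx (k : Type u) [Field k] (r : ℕ) (ε t : k) (c : ℕ → k) : Cherednik k r ε t c :=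
  RingQuot.mkAlgHom k (CherednikRel k r ε t c) (FreeAlgebra.ι k (0 : Fin 3))

/-- The generator `y` of `H_t`. -/
def Hy (k : Type u) [Field k] (r : ℕ) (ε t : k) (c : ℕ → k) : Cherednik k r ε t c :=
  RingQuot.mkAlgHom k (CherednikRel k r ε t c) (FreeAlgebra.ι k (1 : Fin 3))

/-- The generator `s` of `H_t`. -/
def Hs (k : Type u) [Field k] (r : ℕ) (ε t : k) (c : ℕ → k) : Cherednik k r ε t c :=
  RingQuot.mkAlgHom k (CherednikRel k r ε t c) (FreeAlgebra.ι k (2 : Fin 3))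

/-- The element `h = x y - ∑_{j=1}^{r-1} c_j (1 - ε^{-j})⁻¹ s^j` of `H_t`. -/
def Hh (k : Type u) [Field k] (r : ℕ) (ε t : k) (c : ℕ → k) : Cherednik k r ε t c :=
  Hx k r ε t c * Hy k r ε t c -
    ∑ j ∈ Finset.Icc 1 (r - 1), (c j * (1 - (ε ^ j)⁻¹)⁻¹) • Hs k r ε t c ^ j

namespace CherProof

open Finset

variable {k : Type u} [Field k] {r : ℕ} {ε t : k} {c : ℕ → k}

lemma hs_pow_r : Hs k r ε t c ^ r = 1 := by
  have h := RingQuot.mkAlgHom_rel k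
    (CherednikRel.spow (k := k) (r := r) (ε := ε) (t := t) (c := c))
  simpa [Hs, map_pow] using h

lemma s_mul_x : Hs k r ε t c * Hx k r ε t c = ε⁻¹ • (Hx k r ε t c * Hs k r ε t c) := by
  have h := RingQuot.mkAlgHom_rel k
    (CherednikRel.sx (k := k) (r := r) (ε := ε) (t := t) (c := c))
  simpa [Hx, Hs, map_mul, map_smul] using h

lemma s_mul_y : Hs k r ε t c * Hy k r ε t c = ε • (Hy k r ε t c * Hs k r ε t c) := by
  have h := RingQuot.mkAlgHom_rel k
    (CherednikRel.sy (k := k) (r := r) (ε := ε) (t := t) (c := c))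
  simpa [Hy, Hs, map_mul, map_smul] using h

lemma yx_sub :
    Hy k r ε t c * Hx k r ε t c - Hx k r ε t c * Hy k r ε t c =
      algebraMap k _ t - ∑ j ∈ Finset.Icc 1 (r - 1), c j • Hs k r ε t c ^ j := by
  have h := RingQuot.mkAlgHom_rel k
    (CherednikRel.yx (k := k) (r := r) (ε := ε) (t := t) (c := c))
  simpa [Hx, Hy, Hs, map_mul, map_sub, map_sum, map_smul, map_pow, AlgHom.commutes] using h

lemma s_mul_x_pow (a : ℕ) :
    Hs k r ε t c * Hx k r ε t c ^ a = (ε⁻¹) ^ a • (Hx k r ε t c ^ a * Hs k r ε t c) := by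
  induction a with
  | zero => simp
  | succ a ih =>
    calc Hs k r ε t c * Hx k r ε t c ^ (a + 1)
        = (Hs k r ε t c * Hx k r ε t c ^ a) * Hx k r ε t c := by
          rw [pow_succ, mul_assoc]
      _ = (ε⁻¹) ^ a • (Hx k r ε t c ^ a * (Hs k r ε t c * Hx k r ε t c)) := by
          rw [ih, smul_mul_assoc, mul_assoc]
      _ = (ε⁻¹) ^ a • (Hx k r ε t c ^ a * (ε⁻¹ • (Hx k r ε t c * Hs k r ε t c))) := by
          rw [s_mul_x]
      _ = (ε⁻¹) ^ (a + 1) • (Hx k r ε t c ^ (a + 1) * Hs k r ε t c) := by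
          rw [mul_smul_comm, smul_smul, ← pow_succ, pow_succ (Hx k r ε t c), mul_assoc]

lemma s_mul_y_pow (b : ℕ) :
    Hs k r ε t c * Hy k r ε t c ^ b = ε ^ b • (Hy k r ε t c ^ b * Hs k r ε t c) := by
  induction b with
  | zero => simp
  | succ b ih =>
    calc Hs k r ε t c * Hy k r ε t c ^ (b + 1)
        = (Hs k r ε t c * Hy k r ε t c ^ b) * Hy k r ε t c := by
          rw [pow_succ, mul_assoc]
      _ = ε ^ b • (Hy k r ε t c ^ b * (Hs k r ε t c * Hy k r ε t c)) := by
          rw [ih, smul_mul_assoc, mul_assoc]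
      _ = ε ^ b • (Hy k r ε t c ^ b * (ε • (Hy k r ε t c * Hs k r ε t c))) := by
          rw [s_mul_y]
      _ = ε ^ (b + 1) • (Hy k r ε t c ^ (b + 1) * Hs k r ε t c) := by
          rw [mul_smul_comm, smul_smul, ← pow_succ, pow_succ (Hy k r ε t c), mul_assoc]

lemma s_pow_mul_x_pow (e a : ℕ) :
    Hs k r ε t c ^ e * Hx k r ε t c ^ a =
      (ε⁻¹) ^ (e * a) • (Hx k r ε t c ^ a * Hs k r ε t c ^ e) := by
  induction e with
  | zero => simp
  | succ e ih =>
    calc Hs k r ε t c ^ (e + 1) * Hx k r ε t c ^ a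
        = Hs k r ε t c ^ e * (Hs k r ε t c * Hx k r ε t c ^ a) := by
          rw [pow_succ, mul_assoc]
      _ = (ε⁻¹) ^ a • (Hs k r ε t c ^ e * Hx k r ε t c ^ a * Hs k r ε t c) := by
          rw [s_mul_x_pow, mul_smul_comm, mul_assoc]
      _ = (ε⁻¹) ^ a • (((ε⁻¹) ^ (e * a) • (Hx k r ε t c ^ a * Hs k r ε t c ^ e)) * Hs k r ε t c) := by
          rw [ih]
      _ = (ε⁻¹) ^ ((e + 1) * a) • (Hx k r ε t c ^ a * Hs k r ε t c ^ (e + 1)) := by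
          rw [smul_mul_assoc, smul_smul, ← pow_add, mul_assoc, ← pow_succ]
          ring_nf

lemma s_pow_mul_y_pow (e b : ℕ) :
    Hs k r ε t c ^ e * Hy k r ε t c ^ b =
      ε ^ (e * b) • (Hy k r ε t c ^ b * Hs k r ε t c ^ e) := by
  induction e with
  | zero => simp
  | succ e ih =>
    calc Hs k r ε t c ^ (e + 1) * Hy k r ε t c ^ b
        = Hs k r ε t c ^ e * (Hs k r ε t c * Hy k r ε t c ^ b) := by
          rw [pow_succ, mul_assoc]
      _ = ε ^ b • (Hs k r ε t c ^ e * Hy k r ε t c ^ b * Hs k r ε t c) := by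
          rw [s_mul_y_pow, mul_smul_comm, mul_assoc]
      _ = ε ^ b • ((ε ^ (e * b) • (Hy k r ε t c ^ b * Hs k r ε t c ^ e)) * Hs k r ε t c) := by
          rw [ih]
      _ = ε ^ ((e + 1) * b) • (Hy k r ε t c ^ b * Hs k r ε t c ^ (e + 1)) := by
          rw [smul_mul_assoc, smul_smul, ← pow_add, mul_assoc, ← pow_succ]
          ring_nf

/-- Auxiliary twisted group-algebra elements appearing when commuting `y` past powers of `x`. -/
def gX (k : Type u) [Field k] (r : ℕ) (ε t : k) (c : ℕ → k) (i : ℕ) : Cherednik k r ε t c :=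
  algebraMap k _ t - ∑ j ∈ Finset.Icc 1 (r - 1), (c j * ε⁻¹ ^ (j * i)) • Hs k r ε t c ^ j

/-- Auxiliary twisted group-algebra elements appearing when commuting `x` past powers of `y`. -/
def gY (k : Type u) [Field k] (r : ℕ) (ε t : k) (c : ℕ → k) (i : ℕ) : Cherednik k r ε t c :=
  algebraMap k _ t - ∑ j ∈ Finset.Icc 1 (r - 1), (c j * ε ^ (j * i)) • Hs k r ε t c ^ j

lemma gX_zero :
    gX k r ε t c 0 = algebraMap k _ t - ∑ j ∈ Finset.Icc 1 (r - 1), c j • Hs k r ε t c ^ j := by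
  simp [gX]

lemma gY_zero :
    gY k r ε t c 0 = algebraMap k _ t - ∑ j ∈ Finset.Icc 1 (r - 1), c j • Hs k r ε t c ^ j := by
  simp [gY]

lemma gX_mul_x_pow (a : ℕ) :
    gX k r ε t c 0 * Hx k r ε t c ^ a = Hx k r ε t c ^ a * gX k r ε t c a := by
  unfold gX
  rw [sub_mul, mul_sub, Algebra.commutes, Finset.sum_mul, Finset.mul_sum]
  congr 1
  refine Finset.sum_congr rfl fun j hj => ?_
  rw [smul_mul_assoc, s_pow_mul_x_pow, smul_smul, mul_smul_comm]
  congr 1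
  rw [Nat.mul_zero, pow_zero, mul_one]

lemma gY_mul_y_pow (b : ℕ) :
    gY k r ε t c 0 * Hy k r ε t c ^ b = Hy k r ε t c ^ b * gY k r ε t c b := by
  unfold gY
  rw [sub_mul, mul_sub, Algebra.commutes, Finset.sum_mul, Finset.mul_sum]
  congr 1
  refine Finset.sum_congr rfl fun j hj => ?_
  rw [smul_mul_assoc, s_pow_mul_y_pow, smul_smul, mul_smul_comm]
  congr 1
  rw [Nat.mul_zero, pow_zero, mul_one]

lemma y_mul_x : Hy k r ε t c * Hx k r ε t c = Hx k r ε t c * Hy k r ε t c + gX k r ε t c 0 := by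
  rw [gX_zero, ← yx_sub]; abel

lemma x_mul_y : Hx k r ε t c * Hy k r ε t c = Hy k r ε t c * Hx k r ε t c - gY k r ε t c 0 := by
  rw [gY_zero, ← yx_sub]; abel

lemma y_mul_x_pow (a : ℕ) :
    Hy k r ε t c * Hx k r ε t c ^ (a + 1) =
      Hx k r ε t c ^ (a + 1) * Hy k r ε t c +
        Hx k r ε t c ^ a * ∑ i ∈ Finset.range (a + 1), gX k r ε t c i := by
  induction a with
  | zero => simpa using y_mul_x
  | succ a ih =>
    calc Hy k r ε t c * Hx k r ε t c ^ (a + 1 + 1)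
        = (Hy k r ε t c * Hx k r ε t c) * Hx k r ε t c ^ (a + 1) := by
          rw [pow_succ', ← mul_assoc]
      _ = Hx k r ε t c * (Hy k r ε t c * Hx k r ε t c ^ (a + 1)) +
            gX k r ε t c 0 * Hx k r ε t c ^ (a + 1) := by
          rw [y_mul_x, add_mul, mul_assoc]
      _ = Hx k r ε t c * (Hx k r ε t c ^ (a + 1) * Hy k r ε t c +
            Hx k r ε t c ^ a * ∑ i ∈ Finset.range (a + 1), gX k r ε t c i) +
            Hx k r ε t c ^ (a + 1) * gX k r ε t c (a + 1) := by
          rw [ih, gX_mul_x_pow]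
      _ = Hx k r ε t c ^ (a + 1 + 1) * Hy k r ε t c +
            Hx k r ε t c ^ (a + 1) * ∑ i ∈ Finset.range (a + 1 + 1), gX k r ε t c i := by
          rw [mul_add, ← mul_assoc, ← mul_assoc, ← pow_succ', ← pow_succ',
            Finset.sum_range_succ (fun i => gX k r ε t c i) (a + 1), mul_add, add_assoc]

lemma x_mul_y_pow (b : ℕ) :
    Hx k r ε t c * Hy k r ε t c ^ (b + 1) =
      Hy k r ε t c ^ (b + 1) * Hx k r ε t c -
        Hy k r ε t c ^ b * ∑ i ∈ Finset.range (b + 1), gY k r ε t c i := by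
  induction b with
  | zero => simpa using x_mul_y
  | succ b ih =>
    calc Hx k r ε t c * Hy k r ε t c ^ (b + 1 + 1)
        = (Hx k r ε t c * Hy k r ε t c) * Hy k r ε t c ^ (b + 1) := by
          rw [pow_succ', ← mul_assoc]
      _ = Hy k r ε t c * (Hx k r ε t c * Hy k r ε t c ^ (b + 1)) -
            gY k r ε t c 0 * Hy k r ε t c ^ (b + 1) := by
          rw [x_mul_y, sub_mul, mul_assoc]
      _ = Hy k r ε t c * (Hy k r ε t c ^ (b + 1) * Hx k r ε t c -
            Hy k r ε t c ^ b * ∑ i ∈ Finset.range (b + 1), gY k r ε t c i) -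
            Hy k r ε t c ^ (b + 1) * gY k r ε t c (b + 1) := by
          rw [ih, gY_mul_y_pow]
      _ = Hy k r ε t c ^ (b + 1 + 1) * Hx k r ε t c -
            Hy k r ε t c ^ (b + 1) * ∑ i ∈ Finset.range (b + 1 + 1), gY k r ε t c i := by
          rw [mul_sub, ← mul_assoc, ← mul_assoc, ← pow_succ', ← pow_succ',
            Finset.sum_range_succ (fun i => gY k r ε t c i) (b + 1), mul_add, sub_sub]

lemma geom_sum_zero {n : ℕ} (hn : ((n : ℕ) : k) = 0) {ζ : k} (hζr : ζ ^ n = 1) :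
    ∑ i ∈ Finset.range n, ζ ^ i = 0 := by
  by_cases h1 : ζ = 1
  · subst h1
    simpa using hn
  · have h := geom_sum_eq h1 n
    rw [h, hζr, sub_self, zero_div]

lemma cast_rp_zero {p : ℕ} [CharP k p] : (((r * p : ℕ) : k)) = 0 := by
  rw [CharP.cast_eq_zero_iff k p]
  exact ⟨r, mul_comm r p⟩

lemma sum_gX_zero {p : ℕ} [CharP k p] (hεr : ε ^ r = 1) :
    ∑ i ∈ Finset.range (r * p), gX k r ε t c i = 0 := by
  unfold gX
  rw [Finset.sum_sub_distrib]
  have h1 : ∑ _i ∈ Finset.range (r * p), algebraMap k (Cherednik k r ε t c) t = 0 := by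
    rw [Finset.sum_const, Finset.card_range, ← Nat.cast_smul_eq_nsmul k,
      cast_rp_zero (p := p), zero_smul]
  rw [h1, Finset.sum_comm, zero_sub, neg_eq_zero]
  refine Finset.sum_eq_zero fun j hj => ?_
  have : ∑ i ∈ Finset.range (r * p), (c j * ε⁻¹ ^ (j * i)) = 0 := by
    have : ∑ i ∈ Finset.range (r * p), (ε⁻¹ ^ j) ^ i = 0 := by
      refine geom_sum_zero (cast_rp_zero (p := p)) ?_
      rw [← pow_mul, show j * (r * p) = r * (j * p) by ring, pow_mul, inv_pow, hεr,
        inv_one, one_pow]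
    calc ∑ i ∈ Finset.range (r * p), (c j * ε⁻¹ ^ (j * i))
        = c j * ∑ i ∈ Finset.range (r * p), (ε⁻¹ ^ j) ^ i := by
          rw [Finset.mul_sum]
          exact Finset.sum_congr rfl fun i _ => by rw [← pow_mul]
      _ = 0 := by rw [this, mul_zero]
  rw [← Finset.sum_smul, this, zero_smul]

lemma sum_gY_zero {p : ℕ} [CharP k p] (hεr : ε ^ r = 1) :
    ∑ i ∈ Finset.range (r * p), gY k r ε t c i = 0 := by
  unfold gY
  rw [Finset.sum_sub_distrib]
  have h1 : ∑ _i ∈ Finset.range (r * p), algebraMap k (Cherednik k r ε t c) t = 0 := by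
    rw [Finset.sum_const, Finset.card_range, ← Nat.cast_smul_eq_nsmul k,
      cast_rp_zero (p := p), zero_smul]
  rw [h1, Finset.sum_comm, zero_sub, neg_eq_zero]
  refine Finset.sum_eq_zero fun j hj => ?_
  have : ∑ i ∈ Finset.range (r * p), (c j * ε ^ (j * i)) = 0 := by
    have : ∑ i ∈ Finset.range (r * p), (ε ^ j) ^ i = 0 := by
      refine geom_sum_zero (cast_rp_zero (p := p)) ?_
      rw [← pow_mul, show j * (r * p) = r * (j * p) by ring, pow_mul, hεr, one_pow]
    calc ∑ i ∈ Finset.range (r * p), (c j * ε ^ (j * i))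
        = c j * ∑ i ∈ Finset.range (r * p), (ε ^ j) ^ i := by
          rw [Finset.mul_sum]
          exact Finset.sum_congr rfl fun i _ => by rw [← pow_mul]
      _ = 0 := by rw [this, mul_zero]
  rw [← Finset.sum_smul, this, zero_smul]

lemma y_mul_X {p : ℕ} [CharP k p] (hεr : ε ^ r = 1) (hq : r * p ≠ 0) :
    Hy k r ε t c * Hx k r ε t c ^ (r * p) = Hx k r ε t c ^ (r * p) * Hy k r ε t c := by
  obtain ⟨m, hm⟩ := Nat.exists_eq_succ_of_ne_zero hq
  have hm2 : r * p = m + 1 := hm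
  have hs : ∑ i ∈ Finset.range (m + 1), gX k r ε t c i = 0 := by
    rw [← hm2]; exact sum_gX_zero (p := p) hεr
  rw [hm2, y_mul_x_pow, hs, mul_zero, add_zero]

lemma x_mul_Y {p : ℕ} [CharP k p] (hεr : ε ^ r = 1) (hq : r * p ≠ 0) :
    Hx k r ε t c * Hy k r ε t c ^ (r * p) = Hy k r ε t c ^ (r * p) * Hx k r ε t c := by
  obtain ⟨m, hm⟩ := Nat.exists_eq_succ_of_ne_zero hq
  have hm2 : r * p = m + 1 := hm
  have hs : ∑ i ∈ Finset.range (m + 1), gY k r ε t c i = 0 := by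
    rw [← hm2]; exact sum_gY_zero (p := p) hεr
  rw [hm2, x_mul_y_pow, hs, mul_zero, sub_zero]

lemma s_mul_X (hεr : ε ^ r = 1) {n : ℕ} (hn : r ∣ n) :
    Hs k r ε t c * Hx k r ε t c ^ n = Hx k r ε t c ^ n * Hs k r ε t c := by
  obtain ⟨m, rfl⟩ := hn
  rw [s_mul_x_pow, inv_pow, pow_mul, hεr, one_pow, inv_one, one_smul]

lemma s_mul_Y (hεr : ε ^ r = 1) {n : ℕ} (hn : r ∣ n) :
    Hs k r ε t c * Hy k r ε t c ^ n = Hy k r ε t c ^ n * Hs k r ε t c := by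
  obtain ⟨m, rfl⟩ := hn
  rw [s_mul_y_pow, pow_mul, hεr, one_pow, one_smul]

lemma adjoin_gens_eq_top :
    Algebra.adjoin k ({Hx k r ε t c, Hy k r ε t c, Hs k r ε t c} :
      Set (Cherednik k r ε t c)) = ⊤ := by
  rw [eq_top_iff]
  rintro z -
  obtain ⟨f, rfl⟩ := RingQuot.mkAlgHom_surjective k (CherednikRel k r ε t c) z
  induction f using FreeAlgebra.induction with
  | grade0 a =>
    rw [AlgHom.commutes]
    exact Subalgebra.algebraMap_mem _ a
  | grade1 i =>
    fin_cases i
    · exact Algebra.subset_adjoin (by left; rfl)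
    · exact Algebra.subset_adjoin (by right; left; rfl)
    · exact Algebra.subset_adjoin (by right; right; rfl)
  | mul f g hf hg =>
    rw [map_mul]
    exact mul_mem hf hg
  | add f g hf hg =>
    rw [map_add]
    exact add_mem hf hg

lemma central_X {p : ℕ} [CharP k p] (hεr : ε ^ r = 1) (hq : r * p ≠ 0)
    (h : Cherednik k r ε t c) :
    h * Hx k r ε t c ^ (r * p) = Hx k r ε t c ^ (r * p) * h := by
  have hle : Algebra.adjoin k ({Hx k r ε t c, Hy k r ε t c, Hs k r ε t c} :
      Set (Cherednik k r ε t c)) ≤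
      Subalgebra.centralizer k {Hx k r ε t c ^ (r * p)} := by
    rw [Algebra.adjoin_le_iff]
    rintro z (rfl | rfl | rfl) <;> rw [SetLike.mem_coe, Subalgebra.mem_centralizer_iff] <;>
      rintro g (rfl : g = _)
    · exact ((Commute.refl (Hx k r ε t c)).pow_left (r * p)).eq
    · exact (y_mul_X (p := p) hεr hq).symm
    · exact (s_mul_X hεr ⟨p, rfl⟩).symm
  have hz : h ∈ Subalgebra.centralizer k {Hx k r ε t c ^ (r * p)} := by
    rw [adjoin_gens_eq_top] at hle
    exact hle (Algebra.mem_top)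
  exact ((Subalgebra.mem_centralizer_iff k).mp hz _ rfl).symm

lemma central_Y {p : ℕ} [CharP k p] (hεr : ε ^ r = 1) (hq : r * p ≠ 0)
    (h : Cherednik k r ε t c) :
    h * Hy k r ε t c ^ (r * p) = Hy k r ε t c ^ (r * p) * h := by
  have hle : Algebra.adjoin k ({Hx k r ε t c, Hy k r ε t c, Hs k r ε t c} :
      Set (Cherednik k r ε t c)) ≤
      Subalgebra.centralizer k {Hy k r ε t c ^ (r * p)} := by
    rw [Algebra.adjoin_le_iff]
    rintro z (rfl | rfl | rfl) <;> rw [SetLike.mem_coe, Subalgebra.mem_centralizer_iff] <;>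
      rintro g (rfl : g = _)
    · exact (x_mul_Y (p := p) hεr hq).symm
    · exact ((Commute.refl (Hy k r ε t c)).pow_left (r * p)).eq
    · exact (s_mul_Y hεr ⟨p, rfl⟩).symm
  have hz : h ∈ Subalgebra.centralizer k {Hy k r ε t c ^ (r * p)} := by
    rw [adjoin_gens_eq_top] at hle
    exact hle (Algebra.mem_top)
  exact ((Subalgebra.mem_centralizer_iff k).mp hz _ rfl).symm

/-- Abstract finiteness: if a simple `A`-module `V` is spanned, over the image of a
polynomial algebra mapping to central elements of `A`, by finitely many vectors, then
it is finite-dimensional over the base field. -/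
theorem finite_of_central_span
    {k : Type u} [Field k] {A : Type u} [Ring A] [Algebra k A]
    {V : Type u} [AddCommGroup V] [Module A V] [Module k V] [IsScalarTower k A V]
    (hsimple : IsSimpleModule A V) {n : ℕ}
    (φ : MvPolynomial (Fin n) k →ₐ[k] A)
    (hcent : ∀ (ρ : MvPolynomial (Fin n) k) (h : A), h * φ ρ = φ ρ * h)
    (T : Finset V)
    (hspan : ∀ w : V, w ∈ Submodule.span k {w : V | ∃ ρ u, u ∈ T ∧ w = φ ρ • u}) :
    FiniteDimensional k V := by
  classical
  letI : Module (MvPolynomial (Fin n) k) V := Module.compHom V φ.toRingHom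
  set R := MvPolynomial (Fin n) k with hR
  have hsmul : ∀ (ρ : R) (v : V), ρ • v = φ ρ • v := fun ρ v => rfl
  haveI instTower : IsScalarTower k R V := by
    constructor
    intro a ρ v
    rw [hsmul, hsmul, map_smul, smul_assoc]
  -- V is finitely generated over R
  haveI hfg : Module.Finite R V := by
    constructor
    refine ⟨T, ?_⟩
    rw [eq_top_iff]
    intro w _
    refine Submodule.span_induction ?_ ?_ ?_ ?_ (hspan w)
    · rintro x ⟨ρ, u, hu, rfl⟩
      rw [← hsmul]
      exact Submodule.smul_mem _ ρ (Submodule.subset_span hu)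
    · exact Submodule.zero_mem _
    · intro x y _ _ hx hy
      exact Submodule.add_mem _ hx hy
    · intro a x _ hx
      have : a • x = (algebraMap k R a) • x := (algebraMap_smul R a x).symm
      rw [this]
      exact Submodule.smul_mem _ _ hx
  haveI : Nontrivial V := IsSimpleModule.nontrivial A V
  set I := Module.annihilator R V with hI
  -- key inverse lemma
  have key : ∀ f : R, f ∉ I → ∃ b : R, f * b - 1 ∈ I := by
    intro f hf
    have hfact : ∀ (h : A) (v : V), f • (h • v) = h • (f • v) := by
      intro h v
      rw [hsmul, hsmul, ← mul_smul, ← hcent, mul_smul]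
    let Lf : V →ₗ[A] V :=
      { toFun := fun v => f • v
        map_add' := fun v w => smul_add f v w
        map_smul' := fun h v => hfact h v }
    have hLf : ∀ v, Lf v = f • v := fun _ => rfl
    have hker : LinearMap.ker Lf = ⊥ := by
      rcases eq_bot_or_eq_top (LinearMap.ker Lf) with h | h
      · exact h
      · exfalso
        refine hf (Module.mem_annihilator.mpr fun v => ?_)
        have : v ∈ LinearMap.ker Lf := h ▸ Submodule.mem_top
        simpa [hLf] using this
    have hrange : LinearMap.range Lf = ⊤ := by
      rcases eq_bot_or_eq_top (LinearMap.range Lf) with h | h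
      · exfalso
        refine hf (Module.mem_annihilator.mpr fun v => ?_)
        have : Lf v ∈ (⊥ : Submodule A V) := h ▸ LinearMap.mem_range_self Lf v
        simpa [hLf] using this
      · exact h
    have hbij : Function.Bijective Lf :=
      ⟨LinearMap.ker_eq_bot.mp hker, LinearMap.range_eq_top.mp hrange⟩
    let e := LinearEquiv.ofBijective Lf hbij
    let ψ : Module.End R V :=
      { toFun := fun v => e.symm v
        map_add' := fun v w => map_add e.symm v w
        map_smul' := fun ρ v => by
          simp only [RingHom.id_apply]
          rw [hsmul, hsmul, map_smul] }
    set Φ : Module.End R V := algebraMap R (Module.End R V) f with hΦ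
    have hΦapp : ∀ v, Φ v = f • v := fun v => rfl
    have hΦψ : Φ * ψ = 1 := by
      ext v
      show Φ (ψ v) = v
      rw [hΦapp]
      show Lf (e.symm v) = v
      exact e.apply_symm_apply v
    have hψΦ : ψ * Φ = 1 := by
      ext v
      show ψ (Φ v) = v
      have : Φ v = e v := rfl
      rw [this]
      exact e.symm_apply_apply v
    have hcomm : Commute Φ ψ := by
      unfold Commute SemiconjBy
      rw [hΦψ, hψΦ]
    obtain ⟨P, hPmonic, hPeval⟩ := Algebra.IsIntegral.isIntegral (R := R) ψ
    set N := P.natDegree with hN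
    have haeval : (0 : Module.End R V) =
        ∑ i ∈ Finset.range (N + 1), P.coeff i • ψ ^ i := by
      have : Polynomial.aeval ψ P = 0 := hPeval
      rw [Polynomial.aeval_eq_sum_range] at this
      exact this.symm
    have hpow : ∀ i, i ≤ N → Φ ^ N * ψ ^ i = Φ ^ (N - i) := by
      intro i hi
      have h1 : Φ ^ N = Φ ^ (N - i) * Φ ^ i := by rw [← pow_add, Nat.sub_add_cancel hi]
      rw [h1, mul_assoc, ← hcomm.mul_pow, hΦψ, one_pow, mul_one]
    set z : R := ∑ i ∈ Finset.range (N + 1), P.coeff i * f ^ (N - i) with hz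
    have hzend : algebraMap R (Module.End R V) z = 0 := by
      rw [hz, map_sum]
      have : ∀ i ∈ Finset.range (N + 1),
          algebraMap R (Module.End R V) (P.coeff i * f ^ (N - i)) =
            P.coeff i • (Φ ^ N * ψ ^ i) := by
        intro i hi
        rw [hpow i (Nat.lt_succ_iff.mp (Finset.mem_range.mp hi)), map_mul, map_pow, ← hΦ,
          ← Algebra.smul_def]
      rw [Finset.sum_congr rfl this]
      calc ∑ i ∈ Finset.range (N + 1), P.coeff i • (Φ ^ N * ψ ^ i)
          = Φ ^ N * ∑ i ∈ Finset.range (N + 1), P.coeff i • ψ ^ i := by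
            rw [Finset.mul_sum]
            exact Finset.sum_congr rfl fun i _ => (mul_smul_comm _ _ _).symm
        _ = 0 := by rw [← haeval, mul_zero]
    have hzI : z ∈ I := by
      refine Module.mem_annihilator.mpr fun v => ?_
      have h1 : z • v = (algebraMap R (Module.End R V) z) v := rfl
      rw [h1, hzend, LinearMap.zero_apply]
    have hcN : P.coeff N = 1 := hPmonic.coeff_natDegree
    set b : R := ∑ i ∈ Finset.range N, P.coeff i * f ^ (N - 1 - i) with hb
    have hzsplit : z = f * b + 1 := by
      rw [hz, Finset.sum_range_succ, hcN, Nat.sub_self, pow_zero, one_mul]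
      congr 1
      rw [hb, Finset.mul_sum]
      refine Finset.sum_congr rfl fun i hi => ?_
      have hii : N - 1 - i + 1 = N - i := by
        have := Finset.mem_range.mp hi
        omega
      calc P.coeff i * f ^ (N - i) = P.coeff i * (f * f ^ (N - 1 - i)) := by
            rw [← pow_succ', hii]
        _ = f * (P.coeff i * f ^ (N - 1 - i)) := by ring
    refine ⟨-b, ?_⟩
    have hcalc : f * -b - 1 = -z := by rw [hzsplit]; ring
    rw [hcalc]
    exact neg_mem hzI
  -- the quotient by the annihilator is a field
  have h1nI : (1 : R) ∉ I := by
    intro h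
    obtain ⟨v, hv⟩ := exists_ne (0 : V)
    exact hv (by simpa using Module.mem_annihilator.mp h v)
  have hIne : I ≠ ⊤ := fun h => h1nI (h ▸ Submodule.mem_top)
  have hfield : IsField (R ⧸ I) := by
    haveI : Nontrivial (R ⧸ I) := Ideal.Quotient.nontrivial_iff.mpr hIne
    refine ⟨exists_pair_ne _, mul_comm, ?_⟩
    intro a ha
    obtain ⟨f, rfl⟩ := Ideal.Quotient.mk_surjective a
    have hfI : f ∉ I := fun h => ha (Ideal.Quotient.eq_zero_iff_mem.mpr h)
    obtain ⟨b, hbI⟩ := key f hfI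
    refine ⟨Ideal.Quotient.mk I b, ?_⟩
    calc Ideal.Quotient.mk I f * Ideal.Quotient.mk I b
        = Ideal.Quotient.mk I (f * b) := (map_mul _ _ _).symm
      _ = Ideal.Quotient.mk I 1 := Ideal.Quotient.eq.mpr hbI
      _ = 1 := map_one _
  haveI hmax : I.IsMaximal := Ideal.Quotient.maximal_of_isField I hfield
  haveI : Algebra.IsIntegral k (R ⧸ I) := by
    rw [Algebra.isIntegral_def]
    exact MvPolynomial.quotient_mk_comp_C_isIntegral_of_isJacobsonRing I
  haveI : Algebra.FiniteType k (R ⧸ I) :=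
    Algebra.FiniteType.of_surjective
      (Ideal.Quotient.mkₐ k I) (Ideal.Quotient.mkₐ_surjective k I)
  haveI hfinQ : Module.Finite k (R ⧸ I) := Algebra.IsIntegral.finite
  letI : Module (R ⧸ I) V := Module.quotientAnnihilator
  haveI : IsScalarTower R (R ⧸ I) V :=
    Module.IsTorsionBySet.isScalarTower (Module.isTorsionBySet_annihilator R V) (S := R)
  haveI : IsScalarTower k (R ⧸ I) V :=
    Module.IsTorsionBySet.isScalarTower (Module.isTorsionBySet_annihilator R V) (S := k)
  haveI : Module.Finite (R ⧸ I) V := Module.Finite.of_restrictScalars_finite R (R ⧸ I) V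
  exact Module.Finite.trans (R ⧸ I) V

lemma hs_pow_mod (m : ℕ) : Hs k r ε t c ^ m = Hs k r ε t c ^ (m % r) := by
  conv_lhs => rw [← Nat.div_add_mod m r]
  rw [pow_add, pow_mul, hs_pow_r, one_pow, one_mul]

lemma x_mul_mono (a b e : ℕ) :
    Hx k r ε t c * (Hx k r ε t c ^ a * Hy k r ε t c ^ b * Hs k r ε t c ^ e) = Hx k r ε t c ^ (a + 1) * Hy k r ε t c ^ b * Hs k r ε t c ^ e := by
  rw [← mul_assoc, ← mul_assoc, ← pow_succ']

lemma s_mul_mono (a b e : ℕ) :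
    Hs k r ε t c * (Hx k r ε t c ^ a * Hy k r ε t c ^ b * Hs k r ε t c ^ e) =
      (ε⁻¹ ^ a * ε ^ b) • (Hx k r ε t c ^ a * Hy k r ε t c ^ b * Hs k r ε t c ^ (e + 1)) := by
  calc Hs k r ε t c * (Hx k r ε t c ^ a * Hy k r ε t c ^ b * Hs k r ε t c ^ e)
      = ((Hs k r ε t c * Hx k r ε t c ^ a) * Hy k r ε t c ^ b) * Hs k r ε t c ^ e := by rw [← mul_assoc, ← mul_assoc]
    _ = ε⁻¹ ^ a • (((Hx k r ε t c ^ a * Hs k r ε t c) * Hy k r ε t c ^ b) * Hs k r ε t c ^ e) := by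
        rw [s_mul_x_pow, smul_mul_assoc, smul_mul_assoc]
    _ = ε⁻¹ ^ a • ((Hx k r ε t c ^ a * (Hs k r ε t c * Hy k r ε t c ^ b)) * Hs k r ε t c ^ e) := by
        rw [mul_assoc (Hx k r ε t c ^ a)]
    _ = ε⁻¹ ^ a • ((Hx k r ε t c ^ a * (ε ^ b • (Hy k r ε t c ^ b * Hs k r ε t c))) * Hs k r ε t c ^ e) := by
        rw [s_mul_y_pow]
    _ = (ε⁻¹ ^ a * ε ^ b) • (Hx k r ε t c ^ a * Hy k r ε t c ^ b * Hs k r ε t c ^ (e + 1)) := by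
        rw [mul_smul_comm, smul_mul_assoc, smul_smul, mul_assoc (Hx k r ε t c ^ a),
          mul_assoc (Hy k r ε t c ^ b), ← pow_succ', ← mul_assoc]

lemma sj_y_mono (a b e j : ℕ) :
    Hx k r ε t c ^ a * (Hs k r ε t c ^ j * (Hy k r ε t c ^ b * Hs k r ε t c ^ e)) =
      ε ^ (j * b) • (Hx k r ε t c ^ a * Hy k r ε t c ^ b * Hs k r ε t c ^ (j + e)) := by
  rw [← mul_assoc (Hs k r ε t c ^ j), s_pow_mul_y_pow, smul_mul_assoc, mul_assoc (Hy k r ε t c ^ b),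
    ← pow_add, mul_smul_comm, ← mul_assoc]

lemma y_mul_mono_zero (b e : ℕ) :
    Hy k r ε t c * (Hx k r ε t c ^ 0 * Hy k r ε t c ^ b * Hs k r ε t c ^ e) = Hx k r ε t c ^ 0 * Hy k r ε t c ^ (b + 1) * Hs k r ε t c ^ e := by
  rw [pow_zero, one_mul, one_mul, ← mul_assoc, ← pow_succ']

lemma y_mul_mono_succ (a b e : ℕ) :
    Hy k r ε t c * (Hx k r ε t c ^ (a + 1) * Hy k r ε t c ^ b * Hs k r ε t c ^ e) =
      Hx k r ε t c ^ (a + 1) * Hy k r ε t c ^ (b + 1) * Hs k r ε t c ^ e +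
        Hx k r ε t c ^ a * ((∑ i ∈ Finset.range (a + 1), gX k r ε t c i) * (Hy k r ε t c ^ b * Hs k r ε t c ^ e)) := by
  calc Hy k r ε t c * (Hx k r ε t c ^ (a + 1) * Hy k r ε t c ^ b * Hs k r ε t c ^ e)
      = (Hy k r ε t c * Hx k r ε t c ^ (a + 1)) * (Hy k r ε t c ^ b * Hs k r ε t c ^ e) := by
        rw [mul_assoc (Hx k r ε t c ^ (a + 1)), ← mul_assoc (Hy k r ε t c)]
    _ = (Hx k r ε t c ^ (a + 1) * Hy k r ε t c) * (Hy k r ε t c ^ b * Hs k r ε t c ^ e) +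
          (Hx k r ε t c ^ a * ∑ i ∈ Finset.range (a + 1), gX k r ε t c i) * (Hy k r ε t c ^ b * Hs k r ε t c ^ e) := by
        rw [y_mul_x_pow, add_mul]
    _ = Hx k r ε t c ^ (a + 1) * Hy k r ε t c ^ (b + 1) * Hs k r ε t c ^ e +
          Hx k r ε t c ^ a * ((∑ i ∈ Finset.range (a + 1), gX k r ε t c i) * (Hy k r ε t c ^ b * Hs k r ε t c ^ e)) := by
        rw [mul_assoc (Hx k r ε t c ^ (a + 1)), ← mul_assoc (Hy k r ε t c), ← pow_succ',
          ← mul_assoc (Hx k r ε t c ^ (a + 1)), mul_assoc (Hx k r ε t c ^ a)]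

lemma gX_sum_mem (m : ℕ) :
    (∑ i ∈ Finset.range m, gX k r ε t c i) ∈
      Submodule.span k (Set.range (fun j => Hs k r ε t c ^ j)) := by
  refine Submodule.sum_mem _ fun i _ => ?_
  unfold gX
  refine Submodule.sub_mem _ ?_
    (Submodule.sum_mem _ fun j _ => Submodule.smul_mem _ _ (Submodule.subset_span ⟨j, rfl⟩))
  have h0 : algebraMap k (Cherednik k r ε t c) t = t • Hs k r ε t c ^ 0 := by
    rw [pow_zero, Algebra.algebraMap_eq_smul_one]
  rw [h0]
  exact Submodule.smul_mem _ _ (Submodule.subset_span ⟨0, rfl⟩)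

end CherProof

open CherProof in
/-- Corollary 3.4: every simple `H`-module is finite-dimensional over `k`. -/
theorem stmt13 (k : Type u) [Field k] (p : ℕ) (hp : p.Prime) [CharP k p]
    (r : ℕ) (hr : 1 ≤ r) (hpr : ¬ p ∣ r) (ε : k) (hε : IsPrimitiveRoot ε r)
    (c : ℕ → k)
    (V : Type u) [AddCommGroup V] [Module (Cherednik k r ε 1 c) V]
    [Module k V] [IsScalarTower k (Cherednik k r ε 1 c) V]
    (hV : IsSimpleModule (Cherednik k r ε 1 c) V) :
    FiniteDimensional k V := by
  classical
  have hεr : ε ^ r = 1 := hε.pow_eq_one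
  have hq0 : r * p ≠ 0 := Nat.mul_ne_zero (by omega) hp.pos.ne'
  have hq_pos : 0 < r * p := Nat.pos_of_ne_zero hq0
  have hr_pos : 0 < r := hr
  haveI hsimp : IsSimpleModule (Cherednik k r ε 1 c) V := hV
  haveI : Nontrivial V := IsSimpleModule.nontrivial (Cherednik k r ε 1 c) V
  obtain ⟨v₀, hv₀⟩ := exists_ne (0 : V)
  have hcommXY : ∀ a ∈ ({Hx k r ε 1 c ^ (r * p), Hy k r ε 1 c ^ (r * p)} : Set (Cherednik k r ε 1 c)),
      ∀ b ∈ ({Hx k r ε 1 c ^ (r * p), Hy k r ε 1 c ^ (r * p)} : Set (Cherednik k r ε 1 c)), a * b = b * a := by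
    rintro a (rfl | rfl) b (rfl | rfl)
    · rfl
    · exact (central_X (p := p) hεr hq0 _).symm
    · exact central_X (p := p) hεr hq0 _
    · rfl
  letI : CommRing (Algebra.adjoin k ({Hx k r ε 1 c ^ (r * p), Hy k r ε 1 c ^ (r * p)} : Set (Cherednik k r ε 1 c))) :=
    Algebra.adjoinCommRingOfComm k hcommXY
  set φ : MvPolynomial (Fin 2) k →ₐ[k] Cherednik k r ε 1 c :=
    (Algebra.adjoin k ({Hx k r ε 1 c ^ (r * p), Hy k r ε 1 c ^ (r * p)} : Set (Cherednik k r ε 1 c))).val.comp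
      (MvPolynomial.aeval
        ![⟨Hx k r ε 1 c ^ (r * p), Algebra.subset_adjoin (by left; rfl)⟩,
          ⟨Hy k r ε 1 c ^ (r * p), Algebra.subset_adjoin (by right; rfl)⟩]) with hφ
  have hφ0 : φ (MvPolynomial.X 0) = Hx k r ε 1 c ^ (r * p) := by
    rw [hφ, AlgHom.comp_apply, MvPolynomial.aeval_X]
    rfl
  have hφ1 : φ (MvPolynomial.X 1) = Hy k r ε 1 c ^ (r * p) := by
    rw [hφ, AlgHom.comp_apply, MvPolynomial.aeval_X]
    rfl
  have hcent : ∀ (ρ : MvPolynomial (Fin 2) k) (h : Cherednik k r ε 1 c), h * φ ρ = φ ρ * h := by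
    intro ρ
    induction ρ using MvPolynomial.induction_on with
    | C a =>
      intro h
      rw [← MvPolynomial.algebraMap_eq, AlgHom.commutes, Algebra.commutes]
    | add f g hf hg =>
      intro h
      rw [map_add, mul_add, add_mul, hf, hg]
    | mul_X f i hf =>
      intro h
      rw [map_mul, ← mul_assoc, hf, mul_assoc, mul_assoc]
      congr 1
      fin_cases i
      · show h * φ (MvPolynomial.X 0) = φ (MvPolynomial.X 0) * h
        rw [hφ0]
        exact central_X (p := p) hεr hq0 h
      · show h * φ (MvPolynomial.X 1) = φ (MvPolynomial.X 1) * h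
        rw [hφ1]
        exact central_Y (p := p) hεr hq0 h
  set T : Finset V := Finset.image
    (fun z : Fin (r * p) × Fin (r * p) × Fin r =>
      (Hx k r ε 1 c ^ (z.1 : ℕ) * Hy k r ε 1 c ^ (z.2.1 : ℕ) * Hs k r ε 1 c ^ (z.2.2 : ℕ)) • v₀)
    Finset.univ with hT
  set W : Submodule k V := Submodule.span k
    {w : V | ∃ ρ u, u ∈ T ∧ w = φ ρ • u} with hW
  have hm_mem : ∀ a b e : ℕ, a < r * p → b < r * p → e < r →
      (Hx k r ε 1 c ^ a * Hy k r ε 1 c ^ b * Hs k r ε 1 c ^ e) • v₀ ∈ W := by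
    intro a b e ha hb he
    refine Submodule.subset_span
      ⟨1, (Hx k r ε 1 c ^ a * Hy k r ε 1 c ^ b * Hs k r ε 1 c ^ e) • v₀, ?_,
        by rw [map_one, one_smul]⟩
    rw [hT]
    exact Finset.mem_image.mpr ⟨(⟨a, ha⟩, ⟨b, hb⟩, ⟨e, he⟩), Finset.mem_univ _, rfl⟩
  have hT_elim : ∀ u ∈ T, ∃ a b e : ℕ, a < r * p ∧ b < r * p ∧ e < r ∧
      u = (Hx k r ε 1 c ^ a * Hy k r ε 1 c ^ b * Hs k r ε 1 c ^ e) • v₀ := by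
    intro u hu
    rw [hT, Finset.mem_image] at hu
    obtain ⟨⟨za, zb, ze⟩, -, rfl⟩ := hu
    exact ⟨za, zb, ze, za.isLt, zb.isLt, ze.isLt, rfl⟩
  have hφcomm : ∀ (ρ : MvPolynomial (Fin 2) k) (h : Cherednik k r ε 1 c) (w : V),
      h • (φ ρ • w) = φ ρ • (h • w) := by
    intro ρ h w
    rw [← mul_smul, hcent, mul_smul]
  have hkcomm : ∀ (h : Cherednik k r ε 1 c) (α : k) (w : V), h • (α • w) = α • (h • w) := by
    intro h α w
    rw [← algebraMap_smul (Cherednik k r ε 1 c) α w, ← mul_smul, ← Algebra.commutes,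
      mul_smul, algebraMap_smul]
  have hWphi : ∀ (ρ : MvPolynomial (Fin 2) k) (w : V), w ∈ W → φ ρ • w ∈ W := by
    intro ρ w hw
    refine Submodule.span_induction ?_ ?_ ?_ ?_ hw
    · rintro x ⟨σ, u, hu, rfl⟩
      rw [← mul_smul, ← map_mul]
      exact Submodule.subset_span ⟨ρ * σ, u, hu, rfl⟩
    · rw [smul_zero]
      exact W.zero_mem
    · intro x y _ _ hx hy
      rw [smul_add]
      exact W.add_mem hx hy
    · intro α x _ hx
      rw [hkcomm]
      exact W.smul_mem α hx
  have hxW : ∀ w ∈ W, Hx k r ε 1 c • w ∈ W := by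
    intro w hw
    refine Submodule.span_induction ?_ ?_ ?_ ?_ hw
    · rintro x ⟨ρ, u, hu, rfl⟩
      rw [hφcomm]
      refine hWphi _ _ ?_
      obtain ⟨a, b, e, ha, hb, he, rfl⟩ := hT_elim u hu
      rw [← mul_smul, x_mul_mono]
      rcases Nat.lt_or_ge (a + 1) (r * p) with h | hge
      · exact hm_mem _ _ _ h hb he
      · have h : a + 1 = r * p := by omega
        rw [h, mul_assoc, mul_smul, ← hφ0]
        refine hWphi _ _ ?_
        simpa using hm_mem 0 b e hq_pos hb he
    · rw [smul_zero]
      exact W.zero_mem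
    · intro x y _ _ hx hy
      rw [smul_add]
      exact W.add_mem hx hy
    · intro α x _ hx
      rw [hkcomm]
      exact W.smul_mem α hx
  have hsW : ∀ w ∈ W, Hs k r ε 1 c • w ∈ W := by
    intro w hw
    refine Submodule.span_induction ?_ ?_ ?_ ?_ hw
    · rintro x ⟨ρ, u, hu, rfl⟩
      rw [hφcomm]
      refine hWphi _ _ ?_
      obtain ⟨a, b, e, ha, hb, he, rfl⟩ := hT_elim u hu
      rw [← mul_smul, s_mul_mono, smul_assoc, hs_pow_mod (e + 1)]
      exact W.smul_mem _ (hm_mem a b ((e + 1) % r) ha hb (Nat.mod_lt _ hr_pos))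
    · rw [smul_zero]
      exact W.zero_mem
    · intro x y _ _ hx hy
      rw [smul_add]
      exact W.add_mem hx hy
    · intro α x _ hx
      rw [hkcomm]
      exact W.smul_mem α hx
  have hyW : ∀ w ∈ W, Hy k r ε 1 c • w ∈ W := by
    intro w hw
    refine Submodule.span_induction ?_ ?_ ?_ ?_ hw
    · rintro x ⟨ρ, u, hu, rfl⟩
      rw [hφcomm]
      refine hWphi _ _ ?_
      obtain ⟨a, b, e, ha, hb, he, rfl⟩ := hT_elim u hu
      cases a with
      | zero =>
        rw [← mul_smul, y_mul_mono_zero]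
        rcases Nat.lt_or_ge (b + 1) (r * p) with h | hge
        · exact hm_mem _ _ _ hq_pos h he
        · have h : b + 1 = r * p := by omega
          rw [h, pow_zero, one_mul, mul_smul, ← hφ1]
          refine hWphi _ _ ?_
          simpa using hm_mem 0 0 e hq_pos hq_pos he
      | succ a' =>
        rw [← mul_smul, y_mul_mono_succ, add_smul]
        refine W.add_mem ?_ ?_
        · rcases Nat.lt_or_ge (b + 1) (r * p) with h | hge
          · exact hm_mem _ _ _ ha h he
          · have h : b + 1 = r * p := by omega
            rw [h]
            have hc : Hx k r ε 1 c ^ (a' + 1) * Hy k r ε 1 c ^ (r * p) = Hy k r ε 1 c ^ (r * p) * Hx k r ε 1 c ^ (a' + 1) :=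
              central_Y (p := p) hεr hq0 _
            rw [hc, mul_assoc, mul_smul, ← hφ1]
            refine hWphi _ _ ?_
            simpa using hm_mem (a' + 1) 0 e ha hq_pos he
        · have haux : ∀ u ∈ Submodule.span k (Set.range (fun j => Hs k r ε 1 c ^ j)),
              (Hx k r ε 1 c ^ a' * (u * (Hy k r ε 1 c ^ b * Hs k r ε 1 c ^ e))) • v₀ ∈ W := by
            intro u hu
            refine Submodule.span_induction ?_ ?_ ?_ ?_ hu
            · rintro x ⟨j, rfl⟩
              rw [sj_y_mono, smul_assoc, hs_pow_mod (j + e)]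
              refine W.smul_mem _ (hm_mem a' b ((j + e) % r)
                (lt_trans (Nat.lt_succ_self a') ha) hb (Nat.mod_lt _ hr_pos))
            · rw [zero_mul, mul_zero, zero_smul]
              exact W.zero_mem
            · intro x y _ _ hx hy
              rw [add_mul, mul_add, add_smul]
              exact W.add_mem hx hy
            · intro α x _ hx
              rw [smul_mul_assoc, mul_smul_comm, smul_assoc]
              exact W.smul_mem α hx
          exact haux _ (gX_sum_mem (a' + 1))
    · rw [smul_zero]
      exact W.zero_mem
    · intro x y _ _ hx hy
      rw [smul_add]
      exact W.add_mem hx hy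
    · intro α x _ hx
      rw [hkcomm]
      exact W.smul_mem α hx
  let D : Subalgebra k (Cherednik k r ε 1 c) :=
    { carrier := {h : Cherednik k r ε 1 c | ∀ w ∈ W, h • w ∈ W}
      mul_mem' := by
         intro h₁ h₂ H1 H2 w hw
         rw [mul_smul]
         exact H1 _ (H2 _ hw)
      one_mem' := by
         intro w hw
         rw [one_smul]
         exact hw
      add_mem' := by
         intro h₁ h₂ H1 H2 w hw
         rw [add_smul]
         exact W.add_mem (H1 _ hw) (H2 _ hw)
      zero_mem' := by
         intro w hw
         rw [zero_smul]
         exact W.zero_mem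
      algebraMap_mem' := by
         intro α w hw
         rw [algebraMap_smul]
         exact W.smul_mem α hw }
  have hDtop : ∀ h : Cherednik k r ε 1 c, ∀ w ∈ W, h • w ∈ W := by
    have hle : Algebra.adjoin k ({Hx k r ε 1 c, Hy k r ε 1 c, Hs k r ε 1 c} : Set (Cherednik k r ε 1 c)) ≤ D := by
      rw [Algebra.adjoin_le_iff]
      rintro z (rfl | rfl | rfl)
      exacts [hxW, hyW, hsW]
    rw [adjoin_gens_eq_top] at hle
    exact fun h => hle Algebra.mem_top
  have hv₀W : v₀ ∈ W := by simpa using hm_mem 0 0 0 hq_pos hq_pos hr_pos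
  have hcyc : ∀ w : V, ∃ h : Cherednik k r ε 1 c, h • v₀ = w := by
    intro w
    have hspan0 : Submodule.span (Cherednik k r ε 1 c) {v₀} = ⊤ := by
      rcases eq_bot_or_eq_top (Submodule.span (Cherednik k r ε 1 c) {v₀}) with h | h
      · exfalso
        refine hv₀ ?_
        have hmem : v₀ ∈ Submodule.span (Cherednik k r ε 1 c) {v₀} := Submodule.mem_span_singleton_self v₀
        rw [h] at hmem
        simpa using hmem
      · exact h
    have hmem : w ∈ Submodule.span (Cherednik k r ε 1 c) {v₀} := hspan0 ▸ Submodule.mem_top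
    exact Submodule.mem_span_singleton.mp hmem
  have hspan : ∀ w : V, w ∈ W := by
    intro w
    obtain ⟨h, rfl⟩ := hcyc w
    exact hDtop h v₀ hv₀W
  exact finite_of_central_span hsimp φ hcent T hspan
end
end

section
/- For all nonnegative integers m, n and 0 ≤ l ≤ r−1 with pr dividing m − n, the element x^m y^n s^l of H lies in the (commutative) subalgebra of H generated by the center of H together with h and s. -/
open scoped BigOperators

noncomputable section

universe u

namespace Ch

variable (k : Type u) [Field k] (r : ℕ) (ε : k) (c : ℕ → k)

local notation "X" => Hx k r ε 1 c
local notation "Y" => Hy k r ε 1 c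
local notation "S" => Hs k r ε 1 c
local notation "H" => Hh k r ε 1 c

lemma Srel : (S) ^ r = 1 := by
  have h := RingQuot.mkAlgHom_rel k (CherednikRel.spow (k := k) (r := r) (ε := ε) (t := 1) (c := c))
  simpa [Hs, map_pow] using h

lemma SXrel : S * X = ε⁻¹ • (X * S) := by
  have h := RingQuot.mkAlgHom_rel k (CherednikRel.sx (k := k) (r := r) (ε := ε) (t := 1) (c := c))
  simpa [Hs, Hx, map_mul] using h

lemma SYrel : S * Y = ε • (Y * S) := by
  have h := RingQuot.mkAlgHom_rel k (CherednikRel.sy (k := k) (r := r) (ε := ε) (t := 1) (c := c))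
  simpa [Hs, Hy, map_mul] using h

lemma YXrel : Y * X - X * Y = 1 - ∑ j ∈ Finset.Icc 1 (r - 1), c j • (S) ^ j := by
  have h := RingQuot.mkAlgHom_rel k (CherednikRel.yx (k := k) (r := r) (ε := ε) (t := 1) (c := c))
  simpa [Hs, Hx, Hy, map_mul, map_sub, map_sum, map_pow] using h

lemma yx_eq : Y * X = X * Y + (1 - ∑ j ∈ Finset.Icc 1 (r - 1), c j • (S) ^ j) :=
  sub_eq_iff_eq_add'.mp (YXrel k r ε c)

lemma xy_eq' : X * Y = Y * X - (1 - ∑ j ∈ Finset.Icc 1 (r - 1), c j • (S) ^ j) :=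
  eq_sub_iff_add_eq.mpr (yx_eq k r ε c).symm

lemma spow_x (j : ℕ) : (S) ^ j * X = ((ε ^ j)⁻¹) • (X * (S) ^ j) := by
  induction j with
  | zero => simp
  | succ j ih =>
    have h1 : (S) ^ (j + 1) * X = (S) ^ j * (S * X) := by rw [pow_succ, mul_assoc]
    rw [h1, SXrel, mul_smul_comm, ← mul_assoc, ih, smul_mul_assoc, smul_smul, mul_assoc,
      ← pow_succ]
    congr 1
    rw [pow_succ, mul_inv, mul_comm]

lemma spow_y (j : ℕ) : (S) ^ j * Y = (ε ^ j) • (Y * (S) ^ j) := by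
  induction j with
  | zero => simp
  | succ j ih =>
    have h1 : (S) ^ (j + 1) * Y = (S) ^ j * (S * Y) := by rw [pow_succ, mul_assoc]
    rw [h1, SYrel, mul_smul_comm, ← mul_assoc, ih, smul_mul_assoc, smul_smul, mul_assoc,
      ← pow_succ]
    congr 1
    rw [pow_succ, mul_comm]

lemma s_xpow (N : ℕ) : S * (X) ^ N = ((ε ^ N)⁻¹) • ((X) ^ N * S) := by
  induction N with
  | zero => simp
  | succ N ih =>
    have h1 : S * (X) ^ (N + 1) = (S * (X) ^ N) * X := by rw [pow_succ, mul_assoc]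
    rw [h1, ih, smul_mul_assoc, mul_assoc, SXrel, mul_smul_comm, smul_smul, ← mul_assoc,
      ← pow_succ]
    congr 1
    rw [pow_succ, mul_inv]

lemma s_ypow (N : ℕ) : S * (Y) ^ N = (ε ^ N) • ((Y) ^ N * S) := by
  induction N with
  | zero => simp
  | succ N ih =>
    have h1 : S * (Y) ^ (N + 1) = (S * (Y) ^ N) * Y := by rw [pow_succ, mul_assoc]
    rw [h1, ih, smul_mul_assoc, mul_assoc, SYrel, mul_smul_comm, smul_smul, ← mul_assoc,
      ← pow_succ]
    congr 1
    rw [pow_succ]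

def eE (i : ℕ) : Cherednik k r ε 1 c :=
  1 - ∑ j ∈ Finset.Icc 1 (r - 1), (c j * ((ε ^ j)⁻¹) ^ i) • (S) ^ j

def fF (i : ℕ) : Cherednik k r ε 1 c :=
  1 - ∑ j ∈ Finset.Icc 1 (r - 1), (c j * (ε ^ j) ^ i) • (S) ^ j

lemma eE_x (i : ℕ) : eE k r ε c i * X = X * eE k r ε c (i + 1) := by
  unfold eE
  rw [sub_mul, one_mul, Finset.sum_mul, mul_sub, mul_one, Finset.mul_sum]
  congr 1
  refine Finset.sum_congr rfl fun j hj => ?_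
  rw [smul_mul_assoc, spow_x, smul_smul, mul_smul_comm]
  congr 1
  ring

lemma fF_y (i : ℕ) : fF k r ε c i * Y = Y * fF k r ε c (i + 1) := by
  unfold fF
  rw [sub_mul, one_mul, Finset.sum_mul, mul_sub, mul_one, Finset.mul_sum]
  congr 1
  refine Finset.sum_congr rfl fun j hj => ?_
  rw [smul_mul_assoc, spow_y, smul_smul, mul_smul_comm]
  congr 1
  ring

lemma eE_zero : eE k r ε c 0 = 1 - ∑ j ∈ Finset.Icc 1 (r - 1), c j • (S) ^ j := by
  unfold eE; simp

lemma fF_zero : fF k r ε c 0 = 1 - ∑ j ∈ Finset.Icc 1 (r - 1), c j • (S) ^ j := by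
  unfold fF; simp

lemma y_xpow (N : ℕ) :
    Y * (X) ^ (N + 1) = (X) ^ (N + 1) * Y + (X) ^ N * (∑ i ∈ Finset.range (N + 1), eE k r ε c i) := by
  induction N with
  | zero =>
    simpa [eE_zero] using yx_eq k r ε c
  | succ N ih =>
    have hsum : (∑ i ∈ Finset.range (N + 1), eE k r ε c i) * X
        = X * ∑ i ∈ Finset.range (N + 1), eE k r ε c (i + 1) := by
      rw [Finset.sum_mul, Finset.mul_sum]
      exact Finset.sum_congr rfl fun i _ => eE_x k r ε c i
    calc Y * (X) ^ (N + 2) = (Y * (X) ^ (N + 1)) * X := by rw [pow_succ, mul_assoc]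
      _ = (X) ^ (N + 1) * (Y * X)
          + (X) ^ N * (X * ∑ i ∈ Finset.range (N + 1), eE k r ε c (i + 1)) := by
          rw [ih, add_mul, mul_assoc, mul_assoc, hsum]
      _ = (X) ^ (N + 2) * Y
          + (X) ^ (N + 1) * (eE k r ε c 0 + ∑ i ∈ Finset.range (N + 1), eE k r ε c (i + 1)) := by
          rw [yx_eq k r ε c, ← eE_zero, mul_add, mul_add, ← mul_assoc, ← mul_assoc,
            ← pow_succ, ← pow_succ, add_assoc]
      _ = (X) ^ (N + 2) * Y + (X) ^ (N + 1) * (∑ i ∈ Finset.range (N + 2), eE k r ε c i) := by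
          rw [Finset.sum_range_succ' (eE k r ε c) (N + 1), add_comm (eE k r ε c 0)]

lemma x_ypow (N : ℕ) :
    X * (Y) ^ (N + 1) = (Y) ^ (N + 1) * X - (Y) ^ N * (∑ i ∈ Finset.range (N + 1), fF k r ε c i) := by
  induction N with
  | zero =>
    simpa [fF_zero] using xy_eq' k r ε c
  | succ N ih =>
    have hsum : (∑ i ∈ Finset.range (N + 1), fF k r ε c i) * Y
        = Y * ∑ i ∈ Finset.range (N + 1), fF k r ε c (i + 1) := by
      rw [Finset.sum_mul, Finset.mul_sum]
      exact Finset.sum_congr rfl fun i _ => fF_y k r ε c i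
    calc X * (Y) ^ (N + 2) = (X * (Y) ^ (N + 1)) * Y := by rw [pow_succ, mul_assoc]
      _ = (Y) ^ (N + 1) * (X * Y)
          - (Y) ^ N * (Y * ∑ i ∈ Finset.range (N + 1), fF k r ε c (i + 1)) := by
          rw [ih, sub_mul, mul_assoc, mul_assoc, hsum]
      _ = (Y) ^ (N + 2) * X
          - (Y) ^ (N + 1) * (fF k r ε c 0 + ∑ i ∈ Finset.range (N + 1), fF k r ε c (i + 1)) := by
          rw [xy_eq' k r ε c, ← fF_zero, mul_sub, mul_add, ← mul_assoc, ← mul_assoc,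
            ← pow_succ, ← pow_succ, sub_sub]
      _ = (Y) ^ (N + 2) * X - (Y) ^ (N + 1) * (∑ i ∈ Finset.range (N + 2), fF k r ε c i) := by
          rw [Finset.sum_range_succ' (fF k r ε c) (N + 1), add_comm (fF k r ε c 0)]

lemma geo (p : ℕ) [CharP k p] (z : k) (hz : z ^ r = 1) (hr : r ≠ 0) :
    ∑ i ∈ Finset.range (p * r), z ^ i = 0 := by
  by_cases h1 : z = 1
  · subst h1
    simp only [one_pow, Finset.sum_const, Finset.card_range, nsmul_eq_mul, mul_one]
    rw [Nat.cast_mul, CharP.cast_eq_zero k p, zero_mul]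
  · rw [geom_sum_eq h1]
    have : z ^ (p * r) = 1 := by rw [mul_comm, pow_mul, hz, one_pow]
    rw [this, sub_self, zero_div]

lemma eE_sum_zero (p : ℕ) [CharP k p] (hε1 : ε ^ r = 1) (hr : r ≠ 0) :
    ∑ i ∈ Finset.range (p * r), eE k r ε c i = 0 := by
  unfold eE
  rw [Finset.sum_sub_distrib]
  have h1 : (∑ _i ∈ Finset.range (p * r), (1 : Cherednik k r ε 1 c)) = 0 := by
    simp only [Finset.sum_const, Finset.card_range, nsmul_eq_mul, mul_one]
    have : ((p * r : ℕ) : Cherednik k r ε 1 c)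
        = algebraMap k (Cherednik k r ε 1 c) ((p * r : ℕ) : k) := by
      rw [map_natCast]
    rw [this, Nat.cast_mul, CharP.cast_eq_zero k p, zero_mul, map_zero]
  have h2 : (∑ i ∈ Finset.range (p * r), ∑ j ∈ Finset.Icc 1 (r - 1),
      (c j * ((ε ^ j)⁻¹) ^ i) • (S) ^ j) = 0 := by
    rw [Finset.sum_comm]
    refine Finset.sum_eq_zero fun j _ => ?_
    have hz : ((ε ^ j)⁻¹) ^ r = 1 := by
      rw [inv_pow, ← pow_mul, mul_comm j r, pow_mul, hε1, one_pow, inv_one]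
    rw [← Finset.sum_smul]
    have : (∑ i ∈ Finset.range (p * r), c j * ((ε ^ j)⁻¹) ^ i) = 0 := by
      rw [← Finset.mul_sum, geo k r p _ hz hr, mul_zero]
    rw [this, zero_smul]
  rw [h1, h2, sub_zero]

lemma fF_sum_zero (p : ℕ) [CharP k p] (hε1 : ε ^ r = 1) (hr : r ≠ 0) :
    ∑ i ∈ Finset.range (p * r), fF k r ε c i = 0 := by
  unfold fF
  rw [Finset.sum_sub_distrib]
  have h1 : (∑ _i ∈ Finset.range (p * r), (1 : Cherednik k r ε 1 c)) = 0 := by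
    simp only [Finset.sum_const, Finset.card_range, nsmul_eq_mul, mul_one]
    have : ((p * r : ℕ) : Cherednik k r ε 1 c)
        = algebraMap k (Cherednik k r ε 1 c) ((p * r : ℕ) : k) := by
      rw [map_natCast]
    rw [this, Nat.cast_mul, CharP.cast_eq_zero k p, zero_mul, map_zero]
  have h2 : (∑ i ∈ Finset.range (p * r), ∑ j ∈ Finset.Icc 1 (r - 1),
      (c j * (ε ^ j) ^ i) • (S) ^ j) = 0 := by
    rw [Finset.sum_comm]
    refine Finset.sum_eq_zero fun j _ => ?_
    have hz : (ε ^ j) ^ r = 1 := by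
      rw [← pow_mul, mul_comm j r, pow_mul, hε1, one_pow]
    rw [← Finset.sum_smul]
    have : (∑ i ∈ Finset.range (p * r), c j * (ε ^ j) ^ i) = 0 := by
      rw [← Finset.mul_sum, geo k r p _ hz hr, mul_zero]
    rw [this, zero_smul]
  rw [h1, h2, sub_zero]

lemma y_xpr (p : ℕ) [CharP k p] (hε1 : ε ^ r = 1) (hp : 0 < p) (hr : r ≠ 0) :
    Y * (X) ^ (p * r) = (X) ^ (p * r) * Y := by
  obtain ⟨N, hN⟩ : ∃ N, p * r = N + 1 :=
    ⟨p * r - 1, by have := Nat.mul_pos hp (Nat.pos_of_ne_zero hr); omega⟩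
  have hsum : ∑ i ∈ Finset.range (N + 1), eE k r ε c i = 0 := by
    rw [← hN]; exact eE_sum_zero k r ε c p hε1 hr
  rw [hN, y_xpow, hsum, mul_zero, add_zero]

lemma x_ypr (p : ℕ) [CharP k p] (hε1 : ε ^ r = 1) (hp : 0 < p) (hr : r ≠ 0) :
    X * (Y) ^ (p * r) = (Y) ^ (p * r) * X := by
  obtain ⟨N, hN⟩ : ∃ N, p * r = N + 1 :=
    ⟨p * r - 1, by have := Nat.mul_pos hp (Nat.pos_of_ne_zero hr); omega⟩
  have hsum : ∑ i ∈ Finset.range (N + 1), fF k r ε c i = 0 := by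
    rw [← hN]; exact fF_sum_zero k r ε c p hε1 hr
  rw [hN, x_ypow, hsum, mul_zero, sub_zero]

lemma s_xpr (p : ℕ) (hε1 : ε ^ r = 1) :
    S * (X) ^ (p * r) = (X) ^ (p * r) * S := by
  rw [s_xpow]
  have : (ε ^ (p * r))⁻¹ = 1 := by rw [mul_comm, pow_mul, hε1, one_pow, inv_one]
  rw [this, one_smul]

lemma s_ypr (p : ℕ) (hε1 : ε ^ r = 1) :
    S * (Y) ^ (p * r) = (Y) ^ (p * r) * S := by
  rw [s_ypow]
  have : ε ^ (p * r) = 1 := by rw [mul_comm, pow_mul, hε1, one_pow]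
  rw [this, one_smul]

lemma gen_top : Algebra.adjoin k ({X, Y, S} : Set (Cherednik k r ε 1 c)) = ⊤ := by
  apply top_unique
  have h1 : ((⊤ : Subalgebra k (FreeAlgebra k (Fin 3))).map
      (RingQuot.mkAlgHom k (CherednikRel k r ε 1 c))) = ⊤ := by
    rw [Algebra.map_top]
    exact (AlgHom.range_eq_top _).mpr (RingQuot.mkAlgHom_surjective k _)
  rw [← h1, ← FreeAlgebra.adjoin_range_ι, AlgHom.map_adjoin]
  apply Algebra.adjoin_le
  rintro w ⟨_, ⟨i, rfl⟩, rfl⟩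
  fin_cases i
  · exact Algebra.subset_adjoin (by left; rfl)
  · exact Algebra.subset_adjoin (by right; left; rfl)
  · exact Algebra.subset_adjoin (by right; right; rfl)

lemma mem_center_of (z : Cherednik k r ε 1 c)
    (h1 : z * X = X * z) (h2 : z * Y = Y * z) (h3 : z * S = S * z) :
    z ∈ Subalgebra.center k (Cherednik k r ε 1 c) := by
  rw [Subalgebra.mem_center_iff]
  intro b
  have htop : (⊤ : Subalgebra k (Cherednik k r ε 1 c))
      ≤ Subalgebra.centralizer k {z} := by
    rw [← gen_top k r ε c]
    apply Algebra.adjoin_le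
    rintro w hw
    rw [SetLike.mem_coe, Subalgebra.mem_centralizer_iff]
    rintro g rfl
    rcases hw with rfl | rfl | rfl
    · exact h1
    · exact h2
    · exact h3
  have hb := htop (Algebra.mem_top (A := Cherednik k r ε 1 c) (x := b))
  rw [Subalgebra.mem_centralizer_iff] at hb
  exact (hb z rfl).symm

lemma xpr_central (p : ℕ) [CharP k p] (hε1 : ε ^ r = 1) (hp : 0 < p) (hr : r ≠ 0) :
    (X) ^ (p * r) ∈ Subalgebra.center k (Cherednik k r ε 1 c) := by
  apply mem_center_of
  · exact ((Commute.refl (X)).pow_left (p * r)).eq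
  · exact (y_xpr k r ε c p hε1 hp hr).symm
  · exact (s_xpr k r ε c p hε1).symm

lemma ypr_central (p : ℕ) [CharP k p] (hε1 : ε ^ r = 1) (hp : 0 < p) (hr : r ≠ 0) :
    (Y) ^ (p * r) ∈ Subalgebra.center k (Cherednik k r ε 1 c) := by
  apply mem_center_of
  · exact (x_ypr k r ε c p hε1 hp hr).symm
  · exact ((Commute.refl (Y)).pow_left (p * r)).eq
  · exact (s_ypr k r ε c p hε1).symm

lemma aux_scalar (a z : k) (h : 1 - z ≠ 0) : a + a * (1 - z)⁻¹ * z = a * (1 - z)⁻¹ := by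
  field_simp
  ring

lemma scalar_fact (hε : IsPrimitiveRoot ε r) (hr : 1 ≤ r) {j : ℕ}
    (hj : j ∈ Finset.Icc 1 (r - 1)) :
    c j + c j * (1 - (ε ^ j)⁻¹)⁻¹ * (ε ^ j)⁻¹ = c j * (1 - (ε ^ j)⁻¹)⁻¹ := by
  rw [Finset.mem_Icc] at hj
  have hne1 : ε ^ j ≠ 1 := hε.pow_ne_one_of_pos_of_lt (by omega) (by omega)
  have hne : (1 : k) - (ε ^ j)⁻¹ ≠ 0 := by
    rw [sub_ne_zero]
    exact fun h => hne1 (inv_eq_one.mp h.symm)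
  exact aux_scalar k (c j) ((ε ^ j)⁻¹) hne

lemma aS_x :
    (∑ j ∈ Finset.Icc 1 (r - 1), (c j * (1 - (ε ^ j)⁻¹)⁻¹) • (S) ^ j) * X
      = X * ∑ j ∈ Finset.Icc 1 (r - 1), (c j * (1 - (ε ^ j)⁻¹)⁻¹ * (ε ^ j)⁻¹) • (S) ^ j := by
  rw [Finset.sum_mul, Finset.mul_sum]
  refine Finset.sum_congr rfl fun j hj => ?_
  rw [smul_mul_assoc, spow_x, smul_smul, mul_smul_comm]

lemma h_x (hε : IsPrimitiveRoot ε r) (hr : 1 ≤ r) : H * X = X * (H + 1) := by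
  have hsc : (∑ j ∈ Finset.Icc 1 (r - 1), c j • (S) ^ j)
      + ∑ j ∈ Finset.Icc 1 (r - 1), (c j * (1 - (ε ^ j)⁻¹)⁻¹ * (ε ^ j)⁻¹) • (S) ^ j
      = ∑ j ∈ Finset.Icc 1 (r - 1), (c j * (1 - (ε ^ j)⁻¹)⁻¹) • (S) ^ j := by
    rw [← Finset.sum_add_distrib]
    refine Finset.sum_congr rfl fun j hj => ?_
    rw [← add_smul, scalar_fact k r ε c hε hr hj]
  unfold Hh
  rw [sub_mul, mul_assoc, yx_eq, aS_x, ← mul_sub]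
  congr 1
  rw [← hsc]
  abel

lemma x_H (hε : IsPrimitiveRoot ε r) (hr : 1 ≤ r) : X * H = (H - 1) * X := by
  have h := h_x k r ε c hε hr
  rw [mul_add, mul_one] at h
  rw [sub_mul, one_mul]
  exact eq_sub_of_add_eq h.symm

lemma x_S (hεne : ε ≠ 0) : X * S = (ε • S) * X := by
  rw [smul_mul_assoc, SXrel, smul_smul, mul_inv_cancel₀ hεne, one_smul]

lemma xy_adj : X * Y = H + ∑ j ∈ Finset.Icc 1 (r - 1), (c j * (1 - (ε ^ j)⁻¹)⁻¹) • (S) ^ j := by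
  unfold Hh
  rw [sub_add_cancel]

lemma move (hε : IsPrimitiveRoot ε r) (hr : 1 ≤ r) (z : Cherednik k r ε 1 c)
    (hz : z ∈ Algebra.adjoin k ({H, S} : Set (Cherednik k r ε 1 c))) :
    ∃ w ∈ Algebra.adjoin k ({H, S} : Set (Cherednik k r ε 1 c)), X * z = w * X := by
  have hεne : ε ≠ 0 := hε.ne_zero (by omega)
  induction hz using Algebra.adjoin_induction with
  | mem w hw =>
    rcases hw with rfl | rfl
    · exact ⟨H - 1, sub_mem (Algebra.subset_adjoin (by left; rfl)) (one_mem _),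
        x_H k r ε c hε hr⟩
    · exact ⟨ε • S, SMulMemClass.smul_mem ε (Algebra.subset_adjoin (by right; rfl)),
        x_S k r ε c hεne⟩
  | algebraMap a =>
    exact ⟨algebraMap k _ a, Subalgebra.algebraMap_mem _ a, (Algebra.commutes a _).symm⟩
  | add u v hu hv ihu ihv =>
    obtain ⟨w1, hw1, e1⟩ := ihu
    obtain ⟨w2, hw2, e2⟩ := ihv
    exact ⟨w1 + w2, add_mem hw1 hw2, by rw [mul_add, e1, e2, add_mul]⟩
  | mul u v hu hv ihu ihv =>
    obtain ⟨w1, hw1, e1⟩ := ihu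
    obtain ⟨w2, hw2, e2⟩ := ihv
    refine ⟨w1 * w2, mul_mem hw1 hw2, ?_⟩
    rw [← mul_assoc, e1, mul_assoc, e2, ← mul_assoc]

lemma xnyn (hε : IsPrimitiveRoot ε r) (hr : 1 ≤ r) (n : ℕ) :
    (X) ^ n * (Y) ^ n ∈ Algebra.adjoin k ({H, S} : Set (Cherednik k r ε 1 c)) := by
  induction n with
  | zero => simpa using one_mem _
  | succ n ih =>
    obtain ⟨w, hw, hcomm⟩ := move k r ε c hε hr _ ih
    have key : (X) ^ (n + 1) * (Y) ^ (n + 1) = w * (X * Y) := by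
      calc (X) ^ (n + 1) * (Y) ^ (n + 1) = (X * (X) ^ n) * ((Y) ^ n * Y) := by
            rw [pow_succ' (Hx k r ε 1 c) n, pow_succ (Hy k r ε 1 c) n]
          _ = (X * ((X) ^ n * (Y) ^ n)) * Y := by
            rw [mul_assoc, mul_assoc, mul_assoc]
          _ = w * (X * Y) := by rw [hcomm, mul_assoc]
    rw [key, xy_adj]
    refine mul_mem hw (add_mem (Algebra.subset_adjoin (by left; rfl)) ?_)
    exact Subalgebra.sum_mem _ fun j _ => SMulMemClass.smul_mem _
      (pow_mem (Algebra.subset_adjoin (by right; rfl)) j)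

end Ch

/-- Lemma 3.9: `x^m y^n s^l` lies in the subalgebra of `H` generated by the center of `H`
together with `h` and `s`, whenever `pr` divides `m - n`. -/
theorem stmt16 (k : Type u) [Field k] (p : ℕ) (hp : p.Prime) [CharP k p]
    (r : ℕ) (hr : 1 ≤ r) (hpr : ¬ p ∣ r) (ε : k) (hε : IsPrimitiveRoot ε r)
    (c : ℕ → k) (m n l : ℕ) (hl : l ≤ r - 1) (hdvd : (p * r : ℤ) ∣ (m : ℤ) - (n : ℤ)) :
    Hx k r ε 1 c ^ m * Hy k r ε 1 c ^ n * Hs k r ε 1 c ^ l ∈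
      Algebra.adjoin k
        ((Subalgebra.center k (Cherednik k r ε 1 c) : Set (Cherednik k r ε 1 c)) ∪
          {Hh k r ε 1 c, Hs k r ε 1 c}) := by
  have hε1 : ε ^ r = 1 := hε.pow_eq_one
  have hp0 : 0 < p := hp.pos
  have hr0 : r ≠ 0 := by omega
  have hT : ∀ z ∈ Algebra.adjoin k ({Hh k r ε 1 c, Hs k r ε 1 c} :
      Set (Cherednik k r ε 1 c)), z ∈ Algebra.adjoin k
        ((Subalgebra.center k (Cherednik k r ε 1 c) : Set (Cherednik k r ε 1 c)) ∪
          {Hh k r ε 1 c, Hs k r ε 1 c}) :=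
    fun z hz => Algebra.adjoin_mono Set.subset_union_right hz
  have hC : ∀ z ∈ Subalgebra.center k (Cherednik k r ε 1 c),
      z ∈ Algebra.adjoin k
        ((Subalgebra.center k (Cherednik k r ε 1 c) : Set (Cherednik k r ε 1 c)) ∪
          {Hh k r ε 1 c, Hs k r ε 1 c}) :=
    fun z hz => Algebra.subset_adjoin (Set.mem_union_left _ hz)
  have hS : Hs k r ε 1 c ∈ Algebra.adjoin k
        ((Subalgebra.center k (Cherednik k r ε 1 c) : Set (Cherednik k r ε 1 c)) ∪
          {Hh k r ε 1 c, Hs k r ε 1 c}) :=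
    Algebra.subset_adjoin (Set.mem_union_right _ (by right; rfl))
  have hXc := Ch.xpr_central k r ε c p hε1 hp0 hr0
  have hYc := Ch.ypr_central k r ε c p hε1 hp0 hr0
  rcases le_or_gt n m with hmn | hmn
  · have hd : (p * r) ∣ (m - n) := by
      have h2 : ((p * r : ℕ) : ℤ) ∣ ((m - n : ℕ) : ℤ) := by
        rw [Nat.cast_sub hmn, Nat.cast_mul]
        exact hdvd
      exact_mod_cast h2
    obtain ⟨q, hq⟩ := hd
    have hm : m = p * r * q + n := by omega
    rw [hm, pow_add, pow_mul, mul_assoc ((Hx k r ε 1 c ^ (p * r)) ^ q)]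
    exact mul_mem (mul_mem (pow_mem (hC _ hXc) q)
      (hT _ (Ch.xnyn k r ε c hε hr n))) (pow_mem hS l)
  · have hd : (p * r) ∣ (n - m) := by
      have h2 : ((p * r : ℕ) : ℤ) ∣ ((n - m : ℕ) : ℤ) := by
        rw [Nat.cast_sub hmn.le, Nat.cast_mul]
        have := dvd_neg.mpr hdvd
        rwa [neg_sub] at this
      exact_mod_cast h2
    obtain ⟨q, hq⟩ := hd
    have hn : n = m + p * r * q := by omega
    rw [hn, pow_add, pow_mul, ← mul_assoc (Hx k r ε 1 c ^ m)]
    exact mul_mem (mul_mem (hT _ (Ch.xnyn k r ε c hε hr m))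
      (pow_mem (hC _ hYc) q)) (pow_mem hS l)
end
end

section
/- For every t ∈ k, the elements x^i y^j s^l with i, j ≥ 0 and 0 ≤ l ≤ r−1 form a k-basis of H_t (the Poincaré–Birkhoff–Witt theorem for H and for H'). -/
open scoped BigOperators

noncomputable section

universe u

noncomputable section PBW

set_option linter.unusedSectionVars false

namespace ChPBW

variable (k : Type u) [Field k] (r : ℕ) (ε t : k) (c : ℕ → k)

theorem q_spow : Hs k r ε t c ^ r = 1 := by
  have := RingQuot.mkAlgHom_rel k (CherednikRel.spow (k:=k) (r:=r) (ε:=ε) (t:=t) (c:=c))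
  simpa [Hs, map_pow] using this

theorem q_sx : Hs k r ε t c * Hx k r ε t c = ε⁻¹ • (Hx k r ε t c * Hs k r ε t c) := by
  have := RingQuot.mkAlgHom_rel k (CherednikRel.sx (k:=k) (r:=r) (ε:=ε) (t:=t) (c:=c))
  simpa [Hs, Hx, map_mul, map_smul] using this

theorem q_sy : Hs k r ε t c * Hy k r ε t c = ε • (Hy k r ε t c * Hs k r ε t c) := by
  have := RingQuot.mkAlgHom_rel k (CherednikRel.sy (k:=k) (r:=r) (ε:=ε) (t:=t) (c:=c))
  simpa [Hs, Hy, map_mul, map_smul] using this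

theorem q_yx : Hy k r ε t c * Hx k r ε t c
    = Hx k r ε t c * Hy k r ε t c + t • (1 : Cherednik k r ε t c)
      - ∑ m ∈ Finset.Icc 1 (r-1), c m • Hs k r ε t c ^ m := by
  have := RingQuot.mkAlgHom_rel k (CherednikRel.yx (k:=k) (r:=r) (ε:=ε) (t:=t) (c:=c))
  simp only [map_sub, map_mul, map_sum, map_smul, map_pow, AlgHom.commutes] at this
  rw [Algebra.algebraMap_eq_smul_one] at this
  rw [sub_eq_iff_eq_add] at this
  rw [Hs, Hx, Hy, this]
  abel


-- derived commutation lemmas (in right-associated form)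
theorem q_sx' (z : Cherednik k r ε t c) :
    Hs k r ε t c * (Hx k r ε t c * z) = ε⁻¹ • (Hx k r ε t c * (Hs k r ε t c * z)) := by
  rw [← mul_assoc, q_sx, smul_mul_assoc, mul_assoc]

theorem q_sy' (z : Cherednik k r ε t c) :
    Hs k r ε t c * (Hy k r ε t c * z) = ε • (Hy k r ε t c * (Hs k r ε t c * z)) := by
  rw [← mul_assoc, q_sy, smul_mul_assoc, mul_assoc]

theorem q_yx' (z : Cherednik k r ε t c) :
    Hy k r ε t c * (Hx k r ε t c * z)
      = Hx k r ε t c * (Hy k r ε t c * z) + t • z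
        - ∑ m ∈ Finset.Icc 1 (r - 1), c m • (Hs k r ε t c ^ m * z) := by
  rw [← mul_assoc, q_yx, sub_mul, add_mul, smul_mul_assoc, one_mul, Finset.sum_mul, mul_assoc]
  congr 1
  exact Finset.sum_congr rfl fun m _ => smul_mul_assoc _ _ _

theorem q_s_xpow' (i : ℕ) (z : Cherednik k r ε t c) :
    Hs k r ε t c * (Hx k r ε t c ^ i * z)
      = (ε⁻¹) ^ i • (Hx k r ε t c ^ i * (Hs k r ε t c * z)) := by
  induction i generalizing z with
  | zero => simp
  | succ n ih =>
    rw [pow_succ', mul_assoc, q_sx', ih, mul_smul_comm, smul_smul, ← pow_succ', mul_assoc]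

theorem q_s_ypow' (j : ℕ) (z : Cherednik k r ε t c) :
    Hs k r ε t c * (Hy k r ε t c ^ j * z)
      = ε ^ j • (Hy k r ε t c ^ j * (Hs k r ε t c * z)) := by
  induction j generalizing z with
  | zero => simp
  | succ n ih =>
    rw [pow_succ', mul_assoc, q_sy', ih, mul_smul_comm, smul_smul, ← pow_succ', mul_assoc]

theorem q_spow_xpow' (m i : ℕ) (z : Cherednik k r ε t c) :
    Hs k r ε t c ^ m * (Hx k r ε t c ^ i * z)
      = ((ε⁻¹) ^ i) ^ m • (Hx k r ε t c ^ i * (Hs k r ε t c ^ m * z)) := by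
  induction m generalizing z with
  | zero => simp
  | succ n ih =>
    rw [pow_succ', mul_assoc, ih, mul_smul_comm, q_s_xpow', smul_smul, ← pow_succ, mul_assoc]

theorem q_spow_ypow' (m j : ℕ) (z : Cherednik k r ε t c) :
    Hs k r ε t c ^ m * (Hy k r ε t c ^ j * z)
      = (ε ^ j) ^ m • (Hy k r ε t c ^ j * (Hs k r ε t c ^ m * z)) := by
  induction m generalizing z with
  | zero => simp
  | succ n ih =>
    rw [pow_succ', mul_assoc, ih, mul_smul_comm, q_s_ypow', smul_smul, ← pow_succ, mul_assoc]

theorem q_smod (a : ℕ) : Hs k r ε t c ^ a = Hs k r ε t c ^ (a % r) := by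
  conv_lhs => rw [← Nat.div_add_mod a r, pow_add, pow_mul, q_spow, one_pow, one_mul]

/-- The PBW monomials. -/
def mono (q : ℕ × ℕ × Fin r) : Cherednik k r ε t c :=
  Hx k r ε t c ^ q.1 * Hy k r ε t c ^ q.2.1 * Hs k r ε t c ^ (q.2.2 : ℕ)

/-- The span of the PBW monomials. -/
def W : Submodule k (Cherednik k r ε t c) := Submodule.span k (Set.range (mono k r ε t c))

theorem mono_mem (hr : 0 < r) (i j a : ℕ) :
    Hx k r ε t c ^ i * (Hy k r ε t c ^ j * Hs k r ε t c ^ a) ∈ W k r ε t c := by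
  rw [q_smod, ← mul_assoc]
  exact Submodule.subset_span ⟨(i, j, ⟨a % r, Nat.mod_lt _ hr⟩), rfl⟩

theorem x_mul_mem {w : Cherednik k r ε t c} (hw : w ∈ W k r ε t c) :
    Hx k r ε t c * w ∈ W k r ε t c := by
  induction hw using Submodule.span_induction with
  | mem w hw =>
    obtain ⟨⟨i, j, l⟩, rfl⟩ := hw
    have : Hx k r ε t c * mono k r ε t c (i, j, l)
        = Hx k r ε t c ^ (i + 1) * (Hy k r ε t c ^ j * Hs k r ε t c ^ (l : ℕ)) := by
      rw [mono, mul_assoc, pow_succ', mul_assoc]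
    rw [this]
    exact mono_mem k r ε t c (Fin.pos l) _ _ _
  | zero => simp
  | add a b _ _ ha hb => rw [mul_add]; exact Submodule.add_mem _ ha hb
  | smul a w _ hw => rw [mul_smul_comm]; exact Submodule.smul_mem _ _ hw

theorem s_mul_mem {w : Cherednik k r ε t c} (hw : w ∈ W k r ε t c) :
    Hs k r ε t c * w ∈ W k r ε t c := by
  induction hw using Submodule.span_induction with
  | mem w hw =>
    obtain ⟨⟨i, j, l⟩, rfl⟩ := hw
    have : Hs k r ε t c * mono k r ε t c (i, j, l)
        = ((ε⁻¹) ^ i * ε ^ j) • (Hx k r ε t c ^ i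
            * (Hy k r ε t c ^ j * Hs k r ε t c ^ ((l : ℕ) + 1))) := by
      rw [mono, mul_assoc, q_s_xpow', q_s_ypow', mul_smul_comm, smul_smul, ← pow_succ']
    rw [this]
    exact Submodule.smul_mem _ _ (mono_mem k r ε t c (Fin.pos l) _ _ _)
  | zero => simp
  | add a b _ _ ha hb => rw [mul_add]; exact Submodule.add_mem _ ha hb
  | smul a w _ hw => rw [mul_smul_comm]; exact Submodule.smul_mem _ _ hw

theorem y_mul_mono_mem (hr : 0 < r) (i j a : ℕ) :
    Hy k r ε t c * (Hx k r ε t c ^ i * (Hy k r ε t c ^ j * Hs k r ε t c ^ a))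
      ∈ W k r ε t c := by
  induction i generalizing j a with
  | zero =>
    have : Hy k r ε t c * (Hx k r ε t c ^ 0 * (Hy k r ε t c ^ j * Hs k r ε t c ^ a))
        = Hx k r ε t c ^ 0 * (Hy k r ε t c ^ (j + 1) * Hs k r ε t c ^ a) := by
      rw [pow_zero, one_mul, one_mul, ← mul_assoc, ← pow_succ']
    rw [this]; exact mono_mem k r ε t c hr _ _ _
  | succ n ih =>
    have key : Hy k r ε t c * (Hx k r ε t c ^ (n + 1) * (Hy k r ε t c ^ j * Hs k r ε t c ^ a))
        = Hx k r ε t c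
            * (Hy k r ε t c * (Hx k r ε t c ^ n * (Hy k r ε t c ^ j * Hs k r ε t c ^ a)))
          + t • (Hx k r ε t c ^ n * (Hy k r ε t c ^ j * Hs k r ε t c ^ a))
          - ∑ m ∈ Finset.Icc 1 (r - 1),
              (c m * (((ε⁻¹) ^ n) ^ m * (ε ^ j) ^ m)) •
                (Hx k r ε t c ^ n * (Hy k r ε t c ^ j * Hs k r ε t c ^ (m + a))) := by
      rw [pow_succ', mul_assoc, q_yx']
      congr 1
      refine Finset.sum_congr rfl fun m _ => ?_
      rw [q_spow_xpow', q_spow_ypow', ← pow_add, smul_smul, mul_smul_comm, smul_smul, mul_assoc]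
    rw [key]
    refine Submodule.sub_mem _ (Submodule.add_mem _ (x_mul_mem k r ε t c (ih _ _))
      (Submodule.smul_mem _ _ (mono_mem k r ε t c hr _ _ _))) ?_
    exact Submodule.sum_mem _ fun m _ => Submodule.smul_mem _ _ (mono_mem k r ε t c hr _ _ _)

theorem y_mul_mem (hr : 0 < r) {w : Cherednik k r ε t c}
    (hw : w ∈ W k r ε t c) : Hy k r ε t c * w ∈ W k r ε t c := by
  induction hw using Submodule.span_induction with
  | mem w hw =>
    obtain ⟨⟨i, j, l⟩, rfl⟩ := hw
    have : mono k r ε t c (i, j, l)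
        = Hx k r ε t c ^ i * (Hy k r ε t c ^ j * Hs k r ε t c ^ (l : ℕ)) := mul_assoc _ _ _
    rw [this]
    exact y_mul_mono_mem k r ε t c hr i j _
  | zero => simp
  | add a b _ _ ha hb => rw [mul_add]; exact Submodule.add_mem _ ha hb
  | smul a w _ hw => rw [mul_smul_comm]; exact Submodule.smul_mem _ _ hw

theorem W_top (hr : 0 < r) : W k r ε t c = ⊤ := by
  rw [eq_top_iff]
  rintro a -
  have h1 : (1 : Cherednik k r ε t c) ∈ W k r ε t c := by
    simpa using mono_mem k r ε t c hr 0 0 0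
  suffices h : ∀ w ∈ W k r ε t c, a * w ∈ W k r ε t c by simpa using h 1 h1
  obtain ⟨b, rfl⟩ := RingQuot.mkAlgHom_surjective k _ a
  induction b with
  | grade0 r' =>
    intro w hw
    rw [AlgHom.commutes, ← Algebra.smul_def]
    exact Submodule.smul_mem _ _ hw
  | grade1 v =>
    intro w hw
    fin_cases v
    · exact x_mul_mem k r ε t c hw
    · exact y_mul_mem k r ε t c hr hw
    · exact s_mul_mem k r ε t c hw
  | mul a b ha hb =>
    intro w hw
    rw [map_mul, mul_assoc]
    exact ha _ (hb _ hw)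
  | add a b ha hb =>
    intro w hw
    rw [map_add, add_mul]
    exact Submodule.add_mem _ (ha w hw) (hb w hw)

/-! ### The PBW module -/

section Mside

variable [NeZero r]

open Fin.NatCast

/-- The underlying space of the PBW representation. -/
abbrev Mo : Type u := (ℕ × ℕ × Fin r) →₀ k

/-- Basis vectors of the PBW module. -/
def eb (q : ℕ × ℕ × Fin r) : Mo k r := Finsupp.single q 1

/-- The geometric sums `G_m(i) = ∑_{u<i} ε^{-mu}`. -/
def Gg (m i : ℕ) : k := ∑ u ∈ Finset.range i, ((ε ^ m)⁻¹) ^ u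

/-- Action of `x` on the PBW module. -/
def Xop : Mo k r →ₗ[k] Mo k r := Finsupp.lmapDomain k k (fun q => (q.1 + 1, q.2))

/-- Value of the `s`-action on a basis vector. -/
def sval (q : ℕ × ℕ × Fin r) : Mo k r :=
  (ε ^ q.2.1 * (ε ^ q.1)⁻¹) • eb k r (q.1, q.2.1, q.2.2 + 1)

/-- Action of `s` on the PBW module. -/
def Sop : Mo k r →ₗ[k] Mo k r := Finsupp.lift _ k _ (sval k r ε)

/-- Value of the `y`-action on a basis vector. -/
def yval (q : ℕ × ℕ × Fin r) : Mo k r :=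
  eb k r (q.1, q.2.1 + 1, q.2.2) + (t * q.1) • eb k r (q.1 - 1, q.2.1, q.2.2)
    - ∑ m ∈ Finset.Icc 1 (r - 1),
        (c m * Gg k ε m q.1 * (ε ^ m) ^ q.2.1) • eb k r (q.1 - 1, q.2.1, q.2.2 + (m : Fin r))

/-- Action of `y` on the PBW module. -/
def Yop : Mo k r →ₗ[k] Mo k r := Finsupp.lift _ k _ (yval k r ε t c)

theorem Xop_single (q : ℕ × ℕ × Fin r) (a : k) :
    Xop k r (Finsupp.single q a) = Finsupp.single (q.1 + 1, q.2) a := by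
  simp [Xop, Finsupp.lmapDomain_apply, Finsupp.mapDomain_single]

theorem Xop_eb (i j : ℕ) (l : Fin r) :
    Xop k r (eb k r (i, j, l)) = eb k r (i + 1, j, l) :=
  Xop_single k r _ _

theorem Sop_single (q : ℕ × ℕ × Fin r) (a : k) :
    Sop k r ε (Finsupp.single q a) = a • sval k r ε q := by
  simp [Sop, Finsupp.lift_apply, Finsupp.sum_single_index]

theorem Sop_eb (q : ℕ × ℕ × Fin r) : Sop k r ε (eb k r q) = sval k r ε q := by
  rw [eb, Sop_single, one_smul]

theorem Yop_single (q : ℕ × ℕ × Fin r) (a : k) :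
    Yop k r ε t c (Finsupp.single q a) = a • yval k r ε t c q := by
  simp [Yop, Finsupp.lift_apply, Finsupp.sum_single_index]

theorem Yop_eb (q : ℕ × ℕ × Fin r) : Yop k r ε t c (eb k r q) = yval k r ε t c q := by
  rw [eb, Yop_single, one_smul]

theorem Sop_pow_eb (n : ℕ) (i j : ℕ) (l : Fin r) :
    (Sop k r ε ^ n) (eb k r (i, j, l))
      = (ε ^ j * (ε ^ i)⁻¹) ^ n • eb k r (i, j, l + (n : Fin r)) := by
  induction n with
  | zero => simp
  | succ n ih =>
    rw [pow_succ', Module.End.mul_apply, ih, map_smul, Sop_eb]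
    simp only [sval, smul_smul]
    rw [← pow_succ, Nat.cast_add, Nat.cast_one, ← add_assoc]

theorem Sop_pow_r (hε1 : ε ^ r = 1) :
    (Sop k r ε) ^ r = 1 := by
  refine Finsupp.lhom_ext fun q a => ?_
  obtain ⟨i, j, l⟩ := q
  have h1 : Finsupp.single (i, j, l) a = a • eb k r (i, j, l) := by simp [eb]
  rw [h1, map_smul, map_smul, Sop_pow_eb, Fin.natCast_self, add_zero]
  have h2 : (ε ^ j * (ε ^ i)⁻¹) ^ r = 1 := by
    rw [mul_pow, inv_pow, ← pow_mul, ← pow_mul, mul_comm j r, mul_comm i r, pow_mul, pow_mul,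
      hε1, one_pow, one_pow, inv_one, mul_one]
  rw [h2, one_smul, Module.End.one_apply]

theorem rel_sx : (Sop k r ε) * (Xop k r) = ε⁻¹ • ((Xop k r) * (Sop k r ε)) := by
  refine Finsupp.lhom_ext fun q a => ?_
  obtain ⟨i, j, l⟩ := q
  simp only [Module.End.mul_apply, LinearMap.smul_apply, Xop_single, Sop_single, sval, eb,
    map_smul, smul_smul, Xop_eb]
  congr 1
  rw [pow_succ, mul_inv_rev]
  ring

theorem rel_sy (hε0 : ε ≠ 0) : (Sop k r ε) * (Yop k r ε t c)
    = ε • ((Yop k r ε t c) * (Sop k r ε)) := by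
  refine Finsupp.lhom_ext fun q a => ?_
  obtain ⟨i, j, l⟩ := q
  have h1 : (Finsupp.single (i, j, l) a : Mo k r) = a • eb k r (i, j, l) := by simp [eb]
  simp only [Module.End.mul_apply, LinearMap.smul_apply, h1, map_smul]
  congr 1
  rw [Yop_eb, Sop_eb]
  cases i with
  | zero =>
    simp only [yval, sval, Gg, Finset.range_zero, Finset.sum_empty, Nat.cast_zero, mul_zero,
      zero_mul, zero_smul, smul_zero, add_zero, sub_zero, Finset.sum_const_zero, map_smul,
      Sop_eb, Yop_eb, pow_zero, inv_one, mul_one]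
    rw [smul_smul, ← pow_succ']
  | succ n =>
    simp only [yval, sval, map_add, map_sub, map_smul, map_sum, Sop_eb, Yop_eb, smul_add,
      smul_sub, Finset.smul_sum, smul_smul, Nat.succ_sub_one]
    congr 1
    · congr 1
      · congr 1
        rw [pow_succ']
        ring
      · congr 1
        field_simp
        ring
    · refine Finset.sum_congr rfl fun m hm => ?_
      rw [add_right_comm l 1 (m : Fin r)]
      congr 1
      field_simp
      ring

theorem rel_yx_eb (hε0 : ε ≠ 0) (i j : ℕ) (l : Fin r) :
    Yop k r ε t c (Xop k r (eb k r (i, j, l))) - Xop k r (Yop k r ε t c (eb k r (i, j, l)))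
      = t • eb k r (i, j, l)
        - ∑ m ∈ Finset.Icc 1 (r - 1), c m • (Sop k r ε ^ m) (eb k r (i, j, l)) := by
  cases i with
  | zero =>
    simp only [Xop_eb, Yop_eb, yval, Gg, Finset.range_zero, Finset.sum_empty, Nat.cast_zero,
      mul_zero, zero_mul, zero_smul, smul_zero, add_zero, sub_zero, Finset.sum_const_zero,
      map_add, map_sub, map_smul, map_sum, Nat.cast_one, Finset.range_one, pow_zero,
      Finset.sum_singleton, Sop_pow_eb, inv_one, mul_one, zero_add, Nat.sub_self]
    rw [sub_right_comm, add_sub_cancel_left]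
    congr 1
    refine Finset.sum_congr rfl fun m hm => ?_
    rw [smul_smul]
    congr 1
    rw [pow_right_comm]
  | succ n =>
    simp only [Xop_eb, Yop_eb, yval, map_add, map_sub, map_smul, map_sum,
      Nat.succ_sub_one, Sop_pow_eb, smul_smul]
    rw [sub_sub_sub_comm, ← Finset.sum_sub_distrib, add_sub_add_left_eq_sub, ← sub_smul]
    congr 1
    · congr 1
      push_cast
      ring
    refine Finset.sum_congr rfl fun m hm => ?_
    rw [← sub_smul]
    congr 1
    rw [Gg, Gg, Finset.sum_range_succ, ← Gg]
    field_simp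
    ring

theorem rel_yx (hε0 : ε ≠ 0) :
    Yop k r ε t c * Xop k r - Xop k r * Yop k r ε t c
      = algebraMap k (Module.End k (Mo k r)) t
        - ∑ m ∈ Finset.Icc 1 (r - 1), c m • Sop k r ε ^ m := by
  refine Finsupp.lhom_ext fun q a => ?_
  obtain ⟨i, j, l⟩ := q
  have h1 : (Finsupp.single (i, j, l) a : Mo k r) = a • eb k r (i, j, l) := by simp [eb]
  simp only [LinearMap.sub_apply, Module.End.mul_apply, h1, map_smul,
    Module.algebraMap_end_apply, LinearMap.sum_apply, LinearMap.smul_apply]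
  exact congrArg _ (rel_yx_eb k r ε t c hε0 i j l)

/-- The representation of the free algebra on the PBW module. -/
def Fop : FreeAlgebra k (Fin 3) →ₐ[k] Module.End k (Mo k r) :=
  FreeAlgebra.lift k ![Xop k r, Yop k r ε t c, Sop k r ε]

theorem Fop_rel (hε0 : ε ≠ 0) (hε1 : ε ^ r = 1) :
    ∀ ⦃x y⦄, CherednikRel k r ε t c x y → Fop k r ε t c x = Fop k r ε t c y := by
  intro x y h
  induction h with
  | spow =>
    simp only [Fop, map_pow, map_one, FreeAlgebra.lift_ι_apply, Matrix.cons_val_two,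
      Matrix.tail_cons, Matrix.head_cons]
    exact Sop_pow_r k r ε hε1
  | sx =>
    simp only [Fop, map_mul, map_smul, FreeAlgebra.lift_ι_apply, Matrix.cons_val_two,
      Matrix.tail_cons, Matrix.head_cons, Matrix.cons_val_zero]
    exact rel_sx k r ε
  | sy =>
    simp only [Fop, map_mul, map_smul, FreeAlgebra.lift_ι_apply, Matrix.cons_val_two,
      Matrix.tail_cons, Matrix.head_cons, Matrix.cons_val_one]
    exact rel_sy k r ε t c hε0
  | yx =>
    simp only [Fop, map_sub, map_mul, map_sum, map_smul, map_pow, FreeAlgebra.lift_ι_apply,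
      Matrix.cons_val_two, Matrix.tail_cons, Matrix.head_cons, Matrix.cons_val_zero,
      Matrix.cons_val_one, AlgHom.commutes]
    exact rel_yx k r ε t c hε0

theorem Xop_pow_eb (n i j : ℕ) (l : Fin r) :
    (Xop k r ^ n) (eb k r (i, j, l)) = eb k r (i + n, j, l) := by
  induction n with
  | zero => simp
  | succ m ih => rw [pow_succ', Module.End.mul_apply, ih, Xop_eb, ← add_assoc]

theorem Yop_pow_eb0 (n j : ℕ) (l : Fin r) :
    (Yop k r ε t c ^ n) (eb k r (0, j, l)) = eb k r (0, j + n, l) := by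
  induction n with
  | zero => simp
  | succ m ih =>
    rw [pow_succ', Module.End.mul_apply, ih, Yop_eb]
    simp [yval, Gg, ← add_assoc]

theorem phi_eb (hε0 : ε ≠ 0) (hε1 : ε ^ r = 1) (q : ℕ × ℕ × Fin r) :
    (RingQuot.liftAlgHom k ⟨Fop k r ε t c, Fop_rel k r ε t c hε0 hε1⟩)
        (mono k r ε t c q) (eb k r (0, 0, 0)) = eb k r q := by
  obtain ⟨i, j, l⟩ := q
  have hx : (RingQuot.liftAlgHom k ⟨Fop k r ε t c, Fop_rel k r ε t c hε0 hε1⟩)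
      (Hx k r ε t c) = Xop k r := by
    rw [Hx, RingQuot.liftAlgHom_mkAlgHom_apply]
    simp [Fop]
  have hy : (RingQuot.liftAlgHom k ⟨Fop k r ε t c, Fop_rel k r ε t c hε0 hε1⟩)
      (Hy k r ε t c) = Yop k r ε t c := by
    rw [Hy, RingQuot.liftAlgHom_mkAlgHom_apply]
    simp [Fop]
  have hs : (RingQuot.liftAlgHom k ⟨Fop k r ε t c, Fop_rel k r ε t c hε0 hε1⟩)
      (Hs k r ε t c) = Sop k r ε := by
    rw [Hs, RingQuot.liftAlgHom_mkAlgHom_apply]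
    simp [Fop]
  rw [mono, map_mul, map_mul, map_pow, map_pow, map_pow, hx, hy, hs,
    Module.End.mul_apply, Module.End.mul_apply, Sop_pow_eb]
  simp only [pow_zero, inv_one, mul_one, one_pow, one_smul, zero_add, map_smul,
    Fin.cast_val_eq_self, Yop_pow_eb0, Xop_pow_eb]

end Mside

end ChPBW

theorem stmt19' (k : Type u) [Field k]
    (r : ℕ) (hr : 1 ≤ r) (ε : k) (hε1 : ε ^ r = 1) (hε0 : ε ≠ 0)
    (c : ℕ → k) (t : k) :
    ∃ bas : Module.Basis (ℕ × ℕ × Fin r) k (Cherednik k r ε t c),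
      ∀ q : ℕ × ℕ × Fin r,
        bas q = Hx k r ε t c ^ q.1 * Hy k r ε t c ^ q.2.1 * Hs k r ε t c ^ (q.2.2 : ℕ) := by
  haveI : NeZero r := ⟨by omega⟩
  set φ := RingQuot.liftAlgHom k ⟨ChPBW.Fop k r ε t c, ChPBW.Fop_rel k r ε t c hε0 hε1⟩ with hφ
  let ψ : Cherednik k r ε t c →ₗ[k] ChPBW.Mo k r :=
    { toFun := fun a => φ a (ChPBW.eb k r (0, 0, 0))
      map_add' := fun a b => by simp only [map_add, LinearMap.add_apply]
      map_smul' := fun m a => by simp only [map_smul, LinearMap.smul_apply, RingHom.id_apply] }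
  have hψ : ∀ q, ψ (ChPBW.mono k r ε t c q) = ChPBW.eb k r q := fun q =>
    ChPBW.phi_eb k r ε t c hε0 hε1 q
  have h2 : LinearIndependent k (ChPBW.eb k r) := by
    have he : ChPBW.eb k r = ⇑(Finsupp.basisSingleOne (R := k) (ι := ℕ × ℕ × Fin r)) := by
      funext q
      simp [ChPBW.eb]
    rw [he]
    exact Module.Basis.linearIndependent _
  have hli : LinearIndependent k (ChPBW.mono k r ε t c) := by
    apply LinearIndependent.of_comp ψ
    have hc : ⇑ψ ∘ ChPBW.mono k r ε t c = ChPBW.eb k r := funext hψ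
    rw [hc]
    exact h2
  have hspan : ⊤ ≤ Submodule.span k (Set.range (ChPBW.mono k r ε t c)) := by
    rw [show Submodule.span k (Set.range (ChPBW.mono k r ε t c)) = ChPBW.W k r ε t c from rfl,
      ChPBW.W_top k r ε t c (by omega)]
  refine ⟨Module.Basis.mk hli hspan, fun q => ?_⟩
  rw [Module.Basis.mk_apply]
  rfl

/-- Corollary 3.15 / 4.12 (PBW theorem for `H` and `H'`): for every `t`, the elements
`x^i y^j s^l` with `i, j ≥ 0` and `0 ≤ l ≤ r-1` form a `k`-basis of `H_t`. -/
theorem stmt19 (k : Type u) [Field k] (p : ℕ) (hp : p.Prime) [CharP k p]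
    (r : ℕ) (hr : 1 ≤ r) (hpr : ¬ p ∣ r) (ε : k) (hε : IsPrimitiveRoot ε r)
    (c : ℕ → k) (t : k) :
    ∃ bas : Module.Basis (ℕ × ℕ × Fin r) k (Cherednik k r ε t c),
      ∀ q : ℕ × ℕ × Fin r,
        bas q = Hx k r ε t c ^ q.1 * Hy k r ε t c ^ q.2.1 * Hs k r ε t c ^ (q.2.2 : ℕ) := by
  have hε1 : ε ^ r = 1 := hε.pow_eq_one
  have hε0 : ε ≠ 0 := by
    intro h
    rw [h, zero_pow (by omega : r ≠ 0)] at hε1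
    exact zero_ne_one hε1
  exact stmt19' k r hr ε hε1 hε0 c t
end PBW
end
end
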